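/- arXiv:2507.19606 — 8 statements merged into one kernel-verified Lean document; each statement's English description precedes it below -/
import Mathlib

section
/- For all z = (x,p) ∈ ℝ^{2n}, the Wigner transform of the generalized coherent state ψ_{X,Y} is given by Wψ_{X,Y}(z) = (πℏ)^{−n} exp(−(1/ℏ) Gz·z), where G is the 2n×2n block matrix G = [[X + Y X⁻¹ Y, Y X⁻¹],[X⁻¹ Y, X⁻¹]]. -/
/-!
The integrand `e^{−ip·y/ℏ} ψ(x + y/2) conj ψ(x − y/2)` is a Gaussian in `y`: the parallelogram
law for `Xz·z` and the symmetry of `Y` turn its exponent into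
`−(1/ℏ) Xx·x − (1/4ℏ) Xy·y − (i/ℏ)(Yx + p)·y`. Writing `X = BᵀB` and substituting `y = B⁻¹u`
reduces the integral to the Fourier transform of the standard Gaussian, which contributes
`(4πℏ)^{n/2} (det X)^{−1/2} exp(−(1/ℏ) X⁻¹(Yx + p)·(Yx + p))`. Together with `Xx·x`, the exponent
is the block quadratic form `Gz·z`, and the constants collapse to `(πℏ)^{−n}`.
-/

open Matrix MeasureTheory Complex
open scoped Real

/-- The generalized (centered) coherent state
`ψ_{X,Y}(x) = (det X/(πℏ)ⁿ)^{1/4} exp(−(1/2ℏ)(X+iY)x·x)`. -/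
noncomputable def gaussianState (n : ℕ) (ℏ : ℝ) (X Y : Matrix (Fin n) (Fin n) ℝ)
    (x : Fin n → ℝ) : ℂ :=
  (((X.det / (Real.pi * ℏ) ^ n) ^ ((1 : ℝ) / 4) : ℝ) : ℂ) *
    Complex.exp (-(1 / (2 * (ℏ : ℂ))) *
      ∑ j, ∑ k, ((X j k : ℂ) + Complex.I * (Y j k : ℂ)) * (x j : ℂ) * (x k : ℂ))

section QuadraticForm
variable {ι R : Type*} [Fintype ι] [CommRing R]

theorem dotProduct_mulVec_add_add_sub (M : Matrix ι ι R) (v w : ι → R) :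
    (v + w) ⬝ᵥ M *ᵥ (v + w) + (v - w) ⬝ᵥ M *ᵥ (v - w) =
      2 * (v ⬝ᵥ M *ᵥ v) + 2 * (w ⬝ᵥ M *ᵥ w) := by
  simp only [mulVec_add, mulVec_sub, add_dotProduct, dotProduct_add, sub_dotProduct,
    dotProduct_sub]
  ring

theorem Matrix.IsSymm.dotProduct_mulVec_comm {M : Matrix ι ι R} (hM : M.IsSymm) (v w : ι → R) :
    v ⬝ᵥ M *ᵥ w = M *ᵥ v ⬝ᵥ w := by
  rw [dotProduct_mulVec, ← mulVec_transpose, hM.eq]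

theorem Matrix.IsSymm.dotProduct_mulVec_add_sub_sub {M : Matrix ι ι R} (hM : M.IsSymm)
    (v w : ι → R) :
    (v + w) ⬝ᵥ M *ᵥ (v + w) - (v - w) ⬝ᵥ M *ᵥ (v - w) = 4 * (M *ᵥ v ⬝ᵥ w) := by
  simp only [mulVec_add, mulVec_sub, add_dotProduct, dotProduct_add, sub_dotProduct,
    dotProduct_sub, hM.dotProduct_mulVec_comm v w, dotProduct_comm w (M *ᵥ v)]
  ring

theorem Matrix.IsSymm.sumElim_dotProduct_fromBlocks_mulVec {Y : Matrix ι ι R} (hY : Y.IsSymm)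
    (A B : Matrix ι ι R) (x p : ι → R) :
    Sum.elim x p ⬝ᵥ Matrix.fromBlocks (A + Y * B * Y) (Y * B) (B * Y) B *ᵥ Sum.elim x p =
      x ⬝ᵥ A *ᵥ x + (Y *ᵥ x + p) ⬝ᵥ B *ᵥ (Y *ᵥ x + p) := by
  rw [fromBlocks_mulVec, sumElim_dotProduct_sumElim]
  simp only [add_mulVec, mulVec_add, dotProduct_add, add_dotProduct, ← mulVec_mulVec,
    hY.dotProduct_mulVec_comm, Sum.elim_comp_inl, Sum.elim_comp_inr]
  ring

theorem sum_sum_ofReal_mul_mul (M : Matrix ι ι ℝ) (v : ι → ℝ) :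
    ∑ j, ∑ k, (M j k : ℂ) * v j * v k = ↑(v ⬝ᵥ M *ᵥ v) := by
  simp only [dotProduct, mulVec, ofReal_sum, ofReal_mul, Finset.mul_sum]
  exact Finset.sum_congr rfl fun j _ ↦ Finset.sum_congr rfl fun k _ ↦ by ring

end QuadraticForm

section Gaussian
variable {ι : Type*} [Fintype ι]

theorem integral_comp_mulVec {E : Type*} [NormedAddCommGroup E] [NormedSpace ℝ E]
    [DecidableEq ι] {M : Matrix ι ι ℝ} (hM : M.det ≠ 0) (f : (ι → ℝ) → E) :
    ∫ v, f (M *ᵥ v) = |M.det|⁻¹ • ∫ v, f v := by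
  let e : (ι → ℝ) ≃L[ℝ] (ι → ℝ) :=
    (LinearEquiv.ofIsUnitDet (v := Pi.basisFun ℝ ι) (v' := Pi.basisFun ℝ ι) (f := toLin' M)
      (by simpa [LinearMap.toMatrix_eq_toMatrix', isUnit_iff_ne_zero] using hM)
      ).toContinuousLinearEquiv
  calc ∫ v, f (M *ᵥ v) = ∫ v, f v ∂(Measure.map (toLin' M) volume) :=
        (e.toHomeomorph.measurableEmbedding.integral_map f).symm
    _ = |M.det|⁻¹ • ∫ v, f v := by
        rw [Real.map_matrix_volume_pi_eq_smul_volume_pi hM, integral_smul_measure,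
          ENNReal.toReal_ofReal (abs_nonneg _), abs_inv]

theorem integral_cexp_neg_mul_dotProduct_self_add_I_mul {a : ℝ} (ha : 0 < a) (ξ : ι → ℝ) :
    ∫ v : ι → ℝ, cexp (↑(-a * (v ⬝ᵥ v)) + I * ↑(ξ ⬝ᵥ v)) =
      ↑(√(π / a) ^ Fintype.card ι * Real.exp (-(ξ ⬝ᵥ ξ) / (4 * a))) := by
  have hpow : ((π : ℂ) / a) ^ (Fintype.card ι / 2 : ℂ) = ↑(√(π / a) ^ Fintype.card ι) := by
    rw [Real.sqrt_eq_rpow, ← Real.rpow_mul_natCast (by positivity),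
      Complex.ofReal_cpow (by positivity)]
    push_cast
    ring_nf
  calc ∫ v : ι → ℝ, cexp (↑(-a * (v ⬝ᵥ v)) + I * ↑(ξ ⬝ᵥ v))
      = ∫ v : ι → ℝ, cexp (-a * ∑ i, (v i : ℂ) ^ 2 + ∑ i, (I * ξ i) * v i) := by
        push_cast [dotProduct, Finset.mul_sum, pow_two, mul_assoc]
        rfl
    _ = ((π : ℂ) / a) ^ (Fintype.card ι / 2 : ℂ) * cexp ((∑ i, (I * ξ i) ^ 2) / (4 * a)) :=
        GaussianFourier.integral_cexp_neg_mul_sum_add (by simpa using ha) _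
    _ = ↑(√(π / a) ^ Fintype.card ι * Real.exp (-(ξ ⬝ᵥ ξ) / (4 * a))) := by
        simp only [hpow, mul_pow, I_sq, dotProduct, ← pow_two]
        push_cast
        simp [neg_div]

open scoped MatrixOrder in
theorem integral_cexp_neg_mul_dotProduct_mulVec_add_I_mul [DecidableEq ι] {A : Matrix ι ι ℝ}
    (hA : A.PosDef) {a : ℝ} (ha : 0 < a) (ξ : ι → ℝ) :
    ∫ v : ι → ℝ, cexp (↑(-a * (v ⬝ᵥ A *ᵥ v)) + I * ↑(ξ ⬝ᵥ v)) =
      ↑(√(π / a) ^ Fintype.card ι / √A.det * Real.exp (-(ξ ⬝ᵥ A⁻¹ *ᵥ ξ) / (4 * a))) := by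
  obtain ⟨B, hB, rfl⟩ :=
    CStarAlgebra.isStrictlyPositive_iff_eq_star_mul_self.mp hA.isStrictlyPositive
  rw [star_eq_conjTranspose, conjTranspose_eq_transpose_of_trivial]
  have hBdet : IsUnit B.det := (isUnit_iff_isUnit_det B).mp hB
  have hquad (u : ι → ℝ) : B⁻¹ *ᵥ u ⬝ᵥ (Bᵀ * B) *ᵥ (B⁻¹ *ᵥ u) = u ⬝ᵥ u := by
    rw [← mulVec_mulVec, dotProduct_mulVec, ← mulVec_transpose, transpose_transpose,
      mulVec_mulVec, mul_nonsing_inv _ hBdet, one_mulVec]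
  have hlin (u : ι → ℝ) : ξ ⬝ᵥ B⁻¹ *ᵥ u = (ξ ᵥ* B⁻¹) ⬝ᵥ u := dotProduct_mulVec _ _ _
  have hinv : (ξ ᵥ* B⁻¹) ⬝ᵥ (ξ ᵥ* B⁻¹) = ξ ⬝ᵥ (Bᵀ * B)⁻¹ *ᵥ ξ := by
    rw [Matrix.mul_inv_rev, ← mulVec_mulVec, ← dotProduct_mulVec, ← transpose_nonsing_inv,
      mulVec_transpose]
  have hsqrt : √(Bᵀ * B).det = |B.det| := by
    rw [det_mul, det_transpose, ← pow_two, Real.sqrt_sq_eq_abs]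
  have hcov := integral_comp_mulVec (M := B⁻¹) (by simpa [det_nonsing_inv] using hBdet.ne_zero)
    (fun v ↦ cexp (↑(-a * (v ⬝ᵥ (Bᵀ * B) *ᵥ v)) + I * ↑(ξ ⬝ᵥ v)))
  rw [det_nonsing_inv, Ring.inverse_eq_inv', abs_inv, inv_inv] at hcov
  rw [← inv_smul_smul₀ (abs_ne_zero.mpr hBdet.ne_zero) (∫ _, _), ← hcov]
  simp_rw [hquad, hlin, integral_cexp_neg_mul_dotProduct_self_add_I_mul ha, hinv, hsqrt,
    real_smul]
  push_cast
  ring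

end Gaussian

theorem wigner_prefactor_gaussianState (n : ℕ) {ℏ d : ℝ} (hℏ : 0 < ℏ) (hd : 0 < d) :
    (1 / (2 * π * ℏ)) ^ n *
        (((d / (π * ℏ) ^ n) ^ ((1 : ℝ) / 4)) ^ 2 * (√(π / (1 / (4 * ℏ))) ^ n / √d)) =
      (1 / (π * ℏ)) ^ n := by
  have hπℏ : 0 < π * ℏ := by positivity
  have hsq : ((d / (π * ℏ) ^ n) ^ ((1 : ℝ) / 4)) ^ 2 = √(d / (π * ℏ) ^ n) := by
    rw [← Real.rpow_natCast, ← Real.rpow_mul (by positivity), Real.sqrt_eq_rpow]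
    norm_num
  have hpow : √((π * ℏ) ^ n) = √(π * ℏ) ^ n :=
    (Real.sqrt_eq_iff_eq_sq (by positivity) (by positivity)).mpr
      (by rw [← pow_mul, mul_comm n 2, pow_mul, Real.sq_sqrt hπℏ.le])
  have h4 : √(π / (1 / (4 * ℏ))) = 2 * √(π * ℏ) := by
    rw [show π / (1 / (4 * ℏ)) = 2 ^ 2 * (π * ℏ) by field_simp; ring,
      Real.sqrt_mul (by positivity), Real.sqrt_sq zero_le_two]
  rw [hsq, Real.sqrt_div' _ (by positivity), hpow, h4]
  have := Real.sqrt_pos.mpr hd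
  have := Real.sqrt_pos.mpr hπℏ
  field_simp
  simp only [← mul_pow]
  congr 1
  ring

section CoherentState
variable {n : ℕ} {ℏ : ℝ} {X Y : Matrix (Fin n) (Fin n) ℝ}

theorem gaussianState_apply (x : Fin n → ℝ) :
    gaussianState n ℏ X Y x = ↑((X.det / (π * ℏ) ^ n) ^ ((1 : ℝ) / 4)) *
      cexp (↑(-(x ⬝ᵥ X *ᵥ x) / (2 * ℏ)) + I * ↑(-(x ⬝ᵥ Y *ᵥ x) / (2 * ℏ))) := by
  have hsplit : ∑ j, ∑ k, ((X j k : ℂ) + I * (Y j k : ℂ)) * (x j : ℂ) * (x k : ℂ) =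
      ∑ j, ∑ k, (X j k : ℂ) * x j * x k + I * ∑ j, ∑ k, (Y j k : ℂ) * x j * x k := by
    simp only [add_mul, Finset.sum_add_distrib, Finset.mul_sum, mul_assoc]
  rw [gaussianState, hsplit, sum_sum_ofReal_mul_mul, sum_sum_ofReal_mul_mul]
  push_cast
  ring_nf

theorem starRingEnd_gaussianState (x : Fin n → ℝ) :
    starRingEnd ℂ (gaussianState n ℏ X Y x) = gaussianState n ℏ X (-Y) x := by
  simp only [gaussianState_apply, map_mul, conj_ofReal, ← exp_conj, map_add, conj_I,
    neg_mulVec, dotProduct_neg]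
  push_cast
  ring_nf

theorem wigner_integrand_gaussianState (hY : Y.IsSymm) (x p y : Fin n → ℝ) :
    cexp (-(I / ℏ) * ∑ j, (p j : ℂ) * (y j : ℂ)) * gaussianState n ℏ X Y (x + (2 : ℝ)⁻¹ • y) *
        starRingEnd ℂ (gaussianState n ℏ X Y (x - (2 : ℝ)⁻¹ • y)) =
      ↑(((X.det / (π * ℏ) ^ n) ^ ((1 : ℝ) / 4)) ^ 2 * Real.exp (-(x ⬝ᵥ X *ᵥ x) / ℏ)) *
        cexp (↑(-(1 / (4 * ℏ)) * (y ⬝ᵥ X *ᵥ y)) + I * ↑(-ℏ⁻¹ • (Y *ᵥ x + p) ⬝ᵥ y)) := by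
  have hX := dotProduct_mulVec_add_add_sub X x ((2 : ℝ)⁻¹ • y)
  have hY := hY.dotProduct_mulVec_add_sub_sub x ((2 : ℝ)⁻¹ • y)
  have hp : ∑ j, (p j : ℂ) * (y j : ℂ) = ↑(p ⬝ᵥ y) := by simp [dotProduct]
  have hexp (K : ℝ) (A B C : ℂ) :
      cexp A * (K * cexp B) * (K * cexp C) = ↑(K ^ 2) * cexp (A + B + C) := by
    rw [exp_add, exp_add]
    push_cast
    ring
  rw [starRingEnd_gaussianState, gaussianState_apply, gaussianState_apply, hp, hexp,
    ofReal_mul, ofReal_exp, mul_assoc, ← exp_add]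
  congr 2
  simp only [dotProduct_smul, mulVec_smul, smul_dotProduct, smul_eq_mul] at hX hY
  simp only [neg_mulVec, dotProduct_neg]
  generalize (x + (2 : ℝ)⁻¹ • y) ⬝ᵥ X *ᵥ (x + (2 : ℝ)⁻¹ • y) = a at hX ⊢
  generalize (x - (2 : ℝ)⁻¹ • y) ⬝ᵥ X *ᵥ (x - (2 : ℝ)⁻¹ • y) = b at hX ⊢
  generalize (x + (2 : ℝ)⁻¹ • y) ⬝ᵥ Y *ᵥ (x + (2 : ℝ)⁻¹ • y) = c at hY ⊢
  generalize (x - (2 : ℝ)⁻¹ • y) ⬝ᵥ Y *ᵥ (x - (2 : ℝ)⁻¹ • y) = d at hY ⊢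
  obtain rfl : b = 2 * (x ⬝ᵥ X *ᵥ x) + 2⁻¹ * (y ⬝ᵥ X *ᵥ y) - a := by linarith
  obtain rfl : d = c - 2 * (Y *ᵥ x ⬝ᵥ y) := by linarith
  simp only [smul_dotProduct, add_dotProduct, smul_eq_mul]
  push_cast
  ring

end CoherentState

theorem wigner_transform_of_gaussian_general
    (n : ℕ) (ℏ : ℝ) (hℏ : 0 < ℏ)
    (X Y : Matrix (Fin n) (Fin n) ℝ)
    (hY : Y.IsSymm) (hXpd : X.PosDef) :
    ∀ x p : Fin n → ℝ,
      (((1 / (2 * Real.pi * ℏ)) ^ n : ℝ) : ℂ) *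
          ∫ y : Fin n → ℝ,
            Complex.exp (-(Complex.I / (ℏ : ℂ)) * ∑ j, (p j : ℂ) * (y j : ℂ)) *
              gaussianState n ℏ X Y (x + (2 : ℝ)⁻¹ • y) *
              (starRingEnd ℂ) (gaussianState n ℏ X Y (x - (2 : ℝ)⁻¹ • y)) =
        (((1 / (Real.pi * ℏ)) ^ n : ℝ) : ℂ) *
          Complex.exp (-(1 / (ℏ : ℂ)) *
            ((Sum.elim x p ⬝ᵥ
              (fromBlocks (X + Y * X⁻¹ * Y) (Y * X⁻¹) (X⁻¹ * Y) X⁻¹).mulVec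
                (Sum.elim x p) : ℝ) : ℂ)) := by
  intro x p
  have ha : (0 : ℝ) < 1 / (4 * ℏ) := by positivity
  simp_rw [wigner_integrand_gaussianState hY x p, integral_const_mul,
    integral_cexp_neg_mul_dotProduct_mulVec_add_I_mul hXpd ha,
    hY.sumElim_dotProduct_fromBlocks_mulVec, Fintype.card_fin]
  have hexponent : (↑(-(x ⬝ᵥ X *ᵥ x) / ℏ) : ℂ) +
      ↑(-(-ℏ⁻¹ • (Y *ᵥ x + p) ⬝ᵥ X⁻¹ *ᵥ -ℏ⁻¹ • (Y *ᵥ x + p)) / (4 * (1 / (4 * ℏ)))) =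
      -(1 / (ℏ : ℂ)) * ↑(x ⬝ᵥ X *ᵥ x + (Y *ᵥ x + p) ⬝ᵥ X⁻¹ *ᵥ (Y *ᵥ x + p)) := by
    simp only [mulVec_smul, smul_dotProduct, dotProduct_smul, smul_eq_mul]
    push_cast
    field_simp
    ring
  rw [← wigner_prefactor_gaussianState n hℏ hXpd.det_pos, ← hexponent, exp_add]
  push_cast
  ring

/-- The Wigner transform of `ψ_{X,Y}` is the Gaussian `(πℏ)^{−n} exp(−(1/ℏ) Gz·z)` with
`G = [[X + Y X⁻¹ Y, Y X⁻¹],[X⁻¹ Y, X⁻¹]]`. -/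
theorem wigner_transform_of_gaussian
    (n : ℕ) (hn : 1 ≤ n) (ℏ : ℝ) (hℏ : 0 < ℏ)
    (X Y : Matrix (Fin n) (Fin n) ℝ)
    (hX : X.IsSymm) (hY : Y.IsSymm) (hXpd : X.PosDef) :
    ∀ x p : Fin n → ℝ,
      (((1 / (2 * Real.pi * ℏ)) ^ n : ℝ) : ℂ) *
          ∫ y : Fin n → ℝ,
            Complex.exp (-(Complex.I / (ℏ : ℂ)) * ∑ j, (p j : ℂ) * (y j : ℂ)) *
              gaussianState n ℏ X Y (x + (2 : ℝ)⁻¹ • y) *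
              (starRingEnd ℂ) (gaussianState n ℏ X Y (x - (2 : ℝ)⁻¹ • y)) =
        (((1 / (Real.pi * ℏ)) ^ n : ℝ) : ℂ) *
          Complex.exp (-(1 / (ℏ : ℂ)) *
            ((Sum.elim x p ⬝ᵥ
              (fromBlocks (X + Y * X⁻¹ * Y) (Y * X⁻¹) (X⁻¹ * Y) X⁻¹).mulVec
                (Sum.elim x p) : ℝ) : ℂ)) :=
  wigner_transform_of_gaussian_general n ℏ hℏ X Y hY hXpd
end

section
/- Let X, Y be real symmetric n×n matrices with X positive definite, let G be the 2n×2n block matrix G = [[X + Y X⁻¹ Y, Y X⁻¹],[X⁻¹ Y, X⁻¹]], and let S be the block matrix S = [[X^{1/2}, 0],[X^{−1/2} Y, X^{−1/2}]], where X^{1/2} is the positive square root of X. Then S is symplectic, G = Sᵀ S, and consequently G is a symmetric positive definite symplectic matrix with det G = 1. -/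
open Matrix

/-- The standard symplectic matrix `J = [[0, I],[−I, 0]]`. -/
def stdJ (n : ℕ) : Matrix (Fin n ⊕ Fin n) (Fin n ⊕ Fin n) ℝ :=
  fromBlocks 0 1 (-1) 0

/-- A real `2n×2n` matrix is symplectic if `Sᵀ J S = J`. -/
def IsSymplecticMat {n : ℕ} (S : Matrix (Fin n ⊕ Fin n) (Fin n ⊕ Fin n) ℝ) : Prop :=
  Sᵀ * stdJ n * S = stdJ n

open scoped ComplexOrder in
/-- The positive semidefinite square root of a positive semidefinite matrix, as defined in
Mathlib of December 2024 (`Matrix.PosSemidef.sqrt`, since removed from Mathlib). -/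
noncomputable def Matrix.PosSemidef.sqrt {m : Type*} [Fintype m] [DecidableEq m] {𝕜 : Type*}
    [RCLike 𝕜] {A : Matrix m m 𝕜} (hA : A.PosSemidef) : Matrix m m 𝕜 :=
  hA.1.eigenvectorUnitary.1 * diagonal ((↑) ∘ (√·) ∘ hA.1.eigenvalues) *
    (star hA.1.eigenvectorUnitary : Matrix m m 𝕜)

/-!
With `R = X^{1/2}` (symmetric and invertible), `S = [[R, 0], [R⁻¹Y, R⁻¹]]` is block lower
triangular, and the block criterion for symplecticity reduces to `Rᵀ R⁻¹ = 1` and to the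
symmetry of `Rᵀ R⁻¹ Y = Y`. Multiplying out `Sᵀ S` with `R⁻¹ R⁻¹ = X⁻¹` gives `G`. Being a product
of the symplectic matrices `Sᵀ` and `S`, `G` is symplectic, hence has determinant `1`; it is
positive definite because `S` is invertible.
-/

namespace Matrix.PosSemidef

open scoped ComplexOrder

variable {m 𝕜 : Type*} [Fintype m] [DecidableEq m] [RCLike 𝕜] {A : Matrix m m 𝕜}

lemma sqrt_eq_conjStarAlgAut (hA : A.PosSemidef) :
    hA.sqrt = Unitary.conjStarAlgAut 𝕜 _ hA.1.eigenvectorUnitary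
      (diagonal ((↑) ∘ (√·) ∘ hA.1.eigenvalues)) :=
  (Unitary.conjStarAlgAut_apply _ _).symm

lemma sqrt_mul_self (hA : A.PosSemidef) : hA.sqrt * hA.sqrt = A := by
  conv_rhs => rw [hA.1.spectral_theorem]
  rw [sqrt_eq_conjStarAlgAut, ← map_mul, diagonal_mul_diagonal]
  congr 2
  funext i
  simp [← RCLike.ofReal_mul, Real.mul_self_sqrt (hA.eigenvalues_nonneg i)]

lemma isHermitian_sqrt (hA : A.PosSemidef) : hA.sqrt.IsHermitian := by
  rw [IsHermitian, ← star_eq_conjTranspose, sqrt_eq_conjStarAlgAut, ← map_star,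
    star_eq_conjTranspose, diagonal_conjTranspose]
  congr 2
  funext i
  simp

lemma _root_.Matrix.PosDef.isUnit_sqrt (hA : A.PosDef) : IsUnit hA.posSemidef.sqrt := by
  have h : IsUnit (hA.posSemidef.sqrt * hA.posSemidef.sqrt) := by
    rw [hA.posSemidef.sqrt_mul_self]
    exact hA.isUnit
  exact isUnit_of_mul_isUnit_left h

end Matrix.PosSemidef

lemma stdJ_eq_neg_J (n : ℕ) : stdJ n = -J (Fin n) ℝ := by
  simp [stdJ, J, fromBlocks_neg]

section Symplectic

variable {n : ℕ} {S : Matrix (Fin n ⊕ Fin n) (Fin n ⊕ Fin n) ℝ}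

/-- `stdJ n = -J`, and Mathlib's condition is `S * J * Sᵀ = J`: the two sign and transpose
conventions compensate each other. -/
lemma isSymplecticMat_iff_mem_symplecticGroup :
    IsSymplecticMat S ↔ S ∈ symplecticGroup (Fin n) ℝ := by
  rw [← SymplecticGroup.transpose_mem_iff, SymplecticGroup.mem_iff, transpose_transpose,
    IsSymplecticMat, stdJ_eq_neg_J, mul_neg, neg_mul, neg_inj]

namespace IsSymplecticMat

lemma transpose_mul_self (hS : IsSymplecticMat S) : IsSymplecticMat (Sᵀ * S) := by
  rw [isSymplecticMat_iff_mem_symplecticGroup] at hS ⊢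
  exact mul_mem (SymplecticGroup.transpose_mem hS) hS

lemma det_eq_one (hS : IsSymplecticMat S) : S.det = 1 :=
  SymplecticGroup.det_eq_one (isSymplecticMat_iff_mem_symplecticGroup.1 hS)

lemma posDef_transpose_mul_self (hS : IsSymplecticMat S) : (Sᵀ * S).PosDef := by
  have hinj : Function.Injective S.mulVec := by
    rw [mulVec_injective_iff_isUnit, isUnit_iff_isUnit_det, hS.det_eq_one]
    exact isUnit_one
  simpa using PosDef.conjTranspose_mul_self S hinj

end IsSymplecticMat

end Symplectic

namespace SymplecticGroup

variable {l K : Type*} [Fintype l] [DecidableEq l] [CommRing K] {R Y : Matrix l l K}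

lemma fromBlocks_inv_mem (hR : R.IsSymm) (hRu : IsUnit R) (hY : Y.IsSymm) :
    fromBlocks R 0 (R⁻¹ * Y) R⁻¹ ∈ symplecticGroup l K := by
  have hdet : IsUnit R.det := (isUnit_iff_isUnit_det R).1 hRu
  have hRinv : R⁻¹ᵀ = R⁻¹ := by rw [transpose_nonsing_inv, hR.eq]
  rw [fromBlocks_mem_iff, transpose_mul, hR.eq, hRinv, hY.eq]
  refine ⟨?_, by simp, by simp [mul_nonsing_inv R hdet]⟩
  rw [← Matrix.mul_assoc, mul_nonsing_inv R hdet, Matrix.mul_assoc, nonsing_inv_mul R hdet,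
    one_mul, mul_one]

end SymplecticGroup

lemma Matrix.transpose_mul_self_fromBlocks_inv {l K : Type*} [Fintype l] [DecidableEq l]
    [CommRing K] {R Y : Matrix l l K} (hR : R.IsSymm) (hY : Y.IsSymm) :
    (fromBlocks R 0 (R⁻¹ * Y) R⁻¹)ᵀ * fromBlocks R 0 (R⁻¹ * Y) R⁻¹ =
      fromBlocks (R * R + Y * (R * R)⁻¹ * Y) (Y * (R * R)⁻¹) ((R * R)⁻¹ * Y) (R * R)⁻¹ := by
  have hRinv : R⁻¹ᵀ = R⁻¹ := by rw [transpose_nonsing_inv, hR.eq]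
  rw [fromBlocks_transpose, fromBlocks_multiply, transpose_mul, hR.eq, hRinv, hY.eq, mul_inv_rev]
  simp [Matrix.mul_assoc]

theorem wigner_matrix_factorization_general
    (n : ℕ) (X Y : Matrix (Fin n) (Fin n) ℝ)
    (hY : Y.IsSymm) (hXpd : X.PosDef) :
    IsSymplecticMat
        (fromBlocks hXpd.posSemidef.sqrt 0
          (hXpd.posSemidef.sqrt⁻¹ * Y) hXpd.posSemidef.sqrt⁻¹) ∧
      fromBlocks (X + Y * X⁻¹ * Y) (Y * X⁻¹) (X⁻¹ * Y) X⁻¹ =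
        (fromBlocks hXpd.posSemidef.sqrt 0
            (hXpd.posSemidef.sqrt⁻¹ * Y) hXpd.posSemidef.sqrt⁻¹)ᵀ *
          (fromBlocks hXpd.posSemidef.sqrt 0
            (hXpd.posSemidef.sqrt⁻¹ * Y) hXpd.posSemidef.sqrt⁻¹) ∧
      (fromBlocks (X + Y * X⁻¹ * Y) (Y * X⁻¹) (X⁻¹ * Y) X⁻¹).IsSymm ∧
      (fromBlocks (X + Y * X⁻¹ * Y) (Y * X⁻¹) (X⁻¹ * Y) X⁻¹).PosDef ∧
      IsSymplecticMat (fromBlocks (X + Y * X⁻¹ * Y) (Y * X⁻¹) (X⁻¹ * Y) X⁻¹) ∧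
      (fromBlocks (X + Y * X⁻¹ * Y) (Y * X⁻¹) (X⁻¹ * Y) X⁻¹).det = 1 := by
  set R := hXpd.posSemidef.sqrt
  have hR : R.IsSymm := isHermitian_iff_isSymm.1 hXpd.posSemidef.isHermitian_sqrt
  have hS : IsSymplecticMat (fromBlocks R 0 (R⁻¹ * Y) R⁻¹) :=
    isSymplecticMat_iff_mem_symplecticGroup.2
      (SymplecticGroup.fromBlocks_inv_mem hR hXpd.isUnit_sqrt hY)
  have hG : fromBlocks (X + Y * X⁻¹ * Y) (Y * X⁻¹) (X⁻¹ * Y) X⁻¹ =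
      (fromBlocks R 0 (R⁻¹ * Y) R⁻¹)ᵀ * fromBlocks R 0 (R⁻¹ * Y) R⁻¹ := by
    rw [transpose_mul_self_fromBlocks_inv hR hY, hXpd.posSemidef.sqrt_mul_self]
  rw [hG]
  exact ⟨hS, rfl, isSymm_transpose_mul_self _, hS.posDef_transpose_mul_self,
    hS.transpose_mul_self, hS.transpose_mul_self.det_eq_one⟩

/-- With `G = [[X + Y X⁻¹ Y, Y X⁻¹],[X⁻¹ Y, X⁻¹]]` and
`S = [[X^{1/2}, 0],[X^{−1/2} Y, X^{−1/2}]]`: `S` is symplectic, `G = Sᵀ S`, and `G` is a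
symmetric positive definite symplectic matrix with `det G = 1`. -/
theorem wigner_matrix_factorization
    (n : ℕ) (hn : 1 ≤ n) (X Y : Matrix (Fin n) (Fin n) ℝ)
    (hX : X.IsSymm) (hY : Y.IsSymm) (hXpd : X.PosDef) :
    IsSymplecticMat
        (fromBlocks hXpd.posSemidef.sqrt 0
          (hXpd.posSemidef.sqrt⁻¹ * Y) hXpd.posSemidef.sqrt⁻¹) ∧
      fromBlocks (X + Y * X⁻¹ * Y) (Y * X⁻¹) (X⁻¹ * Y) X⁻¹ =
        (fromBlocks hXpd.posSemidef.sqrt 0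
            (hXpd.posSemidef.sqrt⁻¹ * Y) hXpd.posSemidef.sqrt⁻¹)ᵀ *
          (fromBlocks hXpd.posSemidef.sqrt 0
            (hXpd.posSemidef.sqrt⁻¹ * Y) hXpd.posSemidef.sqrt⁻¹) ∧
      (fromBlocks (X + Y * X⁻¹ * Y) (Y * X⁻¹) (X⁻¹ * Y) X⁻¹).IsSymm ∧
      (fromBlocks (X + Y * X⁻¹ * Y) (Y * X⁻¹) (X⁻¹ * Y) X⁻¹).PosDef ∧
      IsSymplecticMat (fromBlocks (X + Y * X⁻¹ * Y) (Y * X⁻¹) (X⁻¹ * Y) X⁻¹) ∧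
      (fromBlocks (X + Y * X⁻¹ * Y) (Y * X⁻¹) (X⁻¹ * Y) X⁻¹).det = 1 :=
  wigner_matrix_factorization_general n X Y hY hXpd
end

section
/- Let X, Y be real symmetric n×n matrices with X positive definite and let ψ = ψ_{X,Y}. Then ψ satisfies the eigenvalue equation Ĥ_{XY} ψ = (ℏ Tr X) ψ, where Ĥ_{XY} = (−iℏ∇_x + Yx)² + X²x·x; explicitly, for every x ∈ ℝⁿ: −ℏ² Δψ(x) − 2iℏ (Yx)·∇ψ(x) − iℏ (Tr Y) ψ(x) + (|Yx|² + X²x·x) ψ(x) = ℏ (Tr X) ψ(x), where Δ is the Laplacian, ∇ the gradient, |Yx|² = (Yx)·(Yx), and X²x·x = Σ_{j,k}(X²)_{jk} x_j x_k. -/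
open Matrix

/-!
Write `ψ = a · exp(c · q_A)` with `q_A(x) = Ax·x`, `A = X + iY` and `c = −1/(2ℏ)`. Since `A` is
symmetric, `∂ⱼψ = −(1/ℏ)(Ax)ⱼ ψ` and `∂ⱼ²ψ = ((1/ℏ²)(Ax)ⱼ² − (1/ℏ)Aⱼⱼ) ψ`. Substituting, each
coordinate contributes `−(Xx + iYx)ⱼ² + 2i(Yx)ⱼ(Xx + iYx)ⱼ + (Yx)ⱼ² + (Xx)ⱼ² = 0` from the
quadratic terms, while `ℏ Tr A − iℏ Tr Y = ℏ Tr X` is what remains.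
-/

noncomputable section

variable {ι : Type*} [Fintype ι]

def quadForm (A : Matrix ι ι ℂ) (x : ι → ℝ) : ℂ := ∑ j, ∑ k, A j k * x j * x k

def ofRealProj (j : ι) : (ι → ℝ) →L[ℝ] ℂ := Complex.ofRealCLM.comp (ContinuousLinearMap.proj j)

def ofRealDot (u : ι → ℂ) : (ι → ℝ) →L[ℝ] ℂ := ∑ k, u k • ofRealProj k

omit [Fintype ι] in
@[simp]
theorem ofRealProj_apply (j : ι) (v : ι → ℝ) : ofRealProj j v = v j := rfl

@[simp]
theorem ofRealDot_apply (u : ι → ℂ) (v : ι → ℝ) : ofRealDot u v = ∑ k, u k * v k := by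
  simp [ofRealDot]

theorem ofRealDot_single [DecidableEq ι] (u : ι → ℂ) (j : ι) :
    ofRealDot u (Pi.single j 1) = u j := by
  simp [Pi.single_apply, apply_ite Complex.ofReal]

theorem hasFDerivAt_mulVec_ofReal_apply (B : Matrix ι ι ℂ) (x : ι → ℝ) (j : ι) :
    HasFDerivAt (fun y : ι → ℝ => (B *ᵥ (Complex.ofReal ∘ y)) j) (ofRealDot fun k => B j k) x := by
  convert (ofRealDot fun k => B j k).hasFDerivAt using 1
  ext y
  simp [mulVec, dotProduct]

theorem hasFDerivAt_quadForm (A : Matrix ι ι ℂ) (x : ι → ℝ) :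
    HasFDerivAt (quadForm A) (ofRealDot ((A + Aᵀ) *ᵥ (Complex.ofReal ∘ x))) x := by
  have h : HasFDerivAt (quadForm A)
      (∑ j, ∑ k, A j k • ((x j : ℂ) • ofRealProj k + (x k : ℂ) • ofRealProj j)) x := by
    refine HasFDerivAt.fun_sum fun j _ => HasFDerivAt.fun_sum fun k _ => ?_
    have := ((ofRealProj j).hasFDerivAt.fun_mul (ofRealProj k).hasFDerivAt (x := x)).const_mul
      (A j k)
    simpa only [mul_assoc, ofRealProj_apply] using this
  convert h using 1
  ext v
  simp only [ofRealDot_apply, _root_.sum_apply, _root_.smul_apply, _root_.add_apply,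
    ofRealProj_apply, smul_eq_mul, mulVec, dotProduct, Matrix.add_apply, transpose_apply,
    Function.comp_apply, add_mul, mul_add, Finset.sum_add_distrib, Finset.sum_mul]
  rw [Finset.sum_comm (f := fun i j => A j i * _ * _), add_comm]
  congr 1 <;> refine Finset.sum_congr rfl fun _ _ => Finset.sum_congr rfl fun _ _ => by ring

def gaussian (a c : ℂ) (A : Matrix ι ι ℂ) (x : ι → ℝ) : ℂ := a * Complex.exp (c * quadForm A x)

section Gaussian

variable (a c : ℂ) (A : Matrix ι ι ℂ)

theorem hasFDerivAt_gaussian (x : ι → ℝ) :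
    HasFDerivAt (gaussian a c A)
      ((gaussian a c A x * c) • ofRealDot ((A + Aᵀ) *ᵥ (Complex.ofReal ∘ x))) x := by
  have h := (((hasFDerivAt_quadForm A x).const_mul c).cexp).const_mul a
  rw [smul_smul, smul_smul] at h
  exact h

variable [DecidableEq ι]

theorem fderiv_gaussian_single (x : ι → ℝ) (j : ι) :
    fderiv ℝ (gaussian a c A) x (Pi.single j 1) =
      gaussian a c A x * (c * ((A + Aᵀ) *ᵥ (Complex.ofReal ∘ x)) j) := by
  rw [(hasFDerivAt_gaussian a c A x).fderiv, _root_.smul_apply, ofRealDot_single, smul_eq_mul,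
    mul_assoc]

theorem fderiv_fderiv_gaussian_single (x : ι → ℝ) (j : ι) :
    fderiv ℝ (fun y => fderiv ℝ (gaussian a c A) y (Pi.single j 1)) x (Pi.single j 1) =
      gaussian a c A x * ((c * ((A + Aᵀ) *ᵥ (Complex.ofReal ∘ x)) j) ^ 2 + c * (A + Aᵀ) j j) := by
  have h := (hasFDerivAt_gaussian a c A x).fun_mul
    ((hasFDerivAt_mulVec_ofReal_apply (A + Aᵀ) x j).const_mul c)
  rw [funext (fderiv_gaussian_single a c A · j), h.fderiv]
  simp only [_root_.add_apply, _root_.smul_apply, ofRealDot_single, smul_eq_mul]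
  ring

end Gaussian

section Complexification

variable {X Y : Matrix ι ι ℝ}

omit [Fintype ι] in
theorem isSymm_map_ofReal_add_I_smul (hX : X.IsSymm) (hY : Y.IsSymm) :
    (X.map (↑) + Complex.I • Y.map (↑) : Matrix ι ι ℂ).IsSymm := by
  simp only [IsSymm, transpose_add, transpose_smul, ← transpose_map, hX.eq, hY.eq]

theorem map_ofReal_add_I_smul_mulVec_apply (x : ι → ℝ) (j : ι) :
    ((X.map (↑) + Complex.I • Y.map (↑) : Matrix ι ι ℂ) *ᵥ (Complex.ofReal ∘ x)) j =
      (X *ᵥ x) j + Complex.I * (Y *ᵥ x) j := by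
  rw [add_mulVec, smul_mulVec, Pi.add_apply, Pi.smul_apply, smul_eq_mul]
  exact congr_arg₂ (· + Complex.I * ·) (Complex.ofRealHom.map_mulVec X x j).symm
    (Complex.ofRealHom.map_mulVec Y x j).symm

end Complexification

theorem Matrix.IsSymm.dotProduct_mul_self_mulVec {R : Type*} [CommRing R] {X : Matrix ι ι R}
    (hX : X.IsSymm) (x : ι → R) : x ⬝ᵥ (X * X) *ᵥ x = X *ᵥ x ⬝ᵥ X *ᵥ x := by
  rw [← mulVec_mulVec, dotProduct_mulVec, ← vecMul_transpose, hX.eq]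

end

theorem gaussian_fermi_eigenvalue_equation_general
    (n : ℕ) (ℏ : ℝ) (hℏ : 0 < ℏ)
    (X Y : Matrix (Fin n) (Fin n) ℝ)
    (hX : X.IsSymm) (hY : Y.IsSymm) :
    ∀ x : Fin n → ℝ,
      -(ℏ : ℂ) ^ 2 *
          (∑ j, fderiv ℝ (fun y => fderiv ℝ (gaussianState n ℏ X Y) y (Pi.single j 1)) x
            (Pi.single j 1)) -
        2 * Complex.I * (ℏ : ℂ) *
          (∑ j, (Y.mulVec x j : ℂ) * fderiv ℝ (gaussianState n ℏ X Y) x (Pi.single j 1)) -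
        Complex.I * (ℏ : ℂ) * (Y.trace : ℂ) * gaussianState n ℏ X Y x +
        (((Y.mulVec x ⬝ᵥ Y.mulVec x : ℝ) : ℂ) + ((x ⬝ᵥ (X * X).mulVec x : ℝ) : ℂ)) *
          gaussianState n ℏ X Y x =
      ((ℏ : ℂ) * (X.trace : ℂ)) * gaussianState n ℏ X Y x := by
  intro x
  set A : Matrix (Fin n) (Fin n) ℂ := X.map (↑) + Complex.I • Y.map (↑)
  have hψ : gaussianState n ℏ X Y = gaussian _ (-(1 / (2 * (ℏ : ℂ)))) A := rfl
  rw [hψ, hX.dotProduct_mul_self_mulVec]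
  simp only [fderiv_fderiv_gaussian_single]
  have hA : Aᵀ = A := (isSymm_map_ofReal_add_I_smul hX hY).eq
  simp only [fderiv_gaussian_single, hA, add_mulVec, Pi.add_apply, Matrix.add_apply]
  simp only [A, map_ofReal_add_I_smul_mulVec_apply, Matrix.add_apply, Matrix.smul_apply,
    map_apply, smul_eq_mul, trace, diag, dotProduct]
  push_cast
  generalize gaussian _ _ _ x = ψ
  simp only [Finset.mul_sum, Finset.sum_mul, ← Finset.sum_add_distrib, ← Finset.sum_sub_distrib]
  refine Finset.sum_congr rfl fun j _ => ?_
  have hℏ' : (ℏ : ℂ) ≠ 0 := by exact_mod_cast hℏ.ne'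
  field_simp
  linear_combination 4 * ψ * ((Y *ᵥ x) j : ℂ) ^ 2 * Complex.I_sq

/-- `ψ_{X,Y}` satisfies the eigenvalue equation `Ĥ_{XY} ψ = (ℏ Tr X) ψ` where
`Ĥ_{XY} = (−iℏ∇_x + Yx)² + X²x·x`; written out with partial derivatives:
`−ℏ² Δψ − 2iℏ (Yx)·∇ψ − iℏ (Tr Y) ψ + (|Yx|² + X²x·x) ψ = ℏ (Tr X) ψ`. -/
theorem gaussian_fermi_eigenvalue_equation
    (n : ℕ) (hn : 1 ≤ n) (ℏ : ℝ) (hℏ : 0 < ℏ)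
    (X Y : Matrix (Fin n) (Fin n) ℝ)
    (hX : X.IsSymm) (hY : Y.IsSymm) (hXpd : X.PosDef) :
    ∀ x : Fin n → ℝ,
      -(ℏ : ℂ) ^ 2 *
          (∑ j, fderiv ℝ (fun y => fderiv ℝ (gaussianState n ℏ X Y) y (Pi.single j 1)) x
            (Pi.single j 1)) -
        2 * Complex.I * (ℏ : ℂ) *
          (∑ j, (Y.mulVec x j : ℂ) * fderiv ℝ (gaussianState n ℏ X Y) x (Pi.single j 1)) -
        Complex.I * (ℏ : ℂ) * (Y.trace : ℂ) * gaussianState n ℏ X Y x +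
        (((Y.mulVec x ⬝ᵥ Y.mulVec x : ℝ) : ℂ) + ((x ⬝ᵥ (X * X).mulVec x : ℝ) : ℂ)) *
          gaussianState n ℏ X Y x =
      ((ℏ : ℂ) * (X.trace : ℂ)) * gaussianState n ℏ X Y x :=
  gaussian_fermi_eigenvalue_equation_general n ℏ hℏ X Y hX hY
end

section
/- Let X, Y be real symmetric n×n matrices with X positive definite and M_{XY} = [[X² + Y², Y],[Y, I]]. Then the spectrum of the complex 2n×2n matrix J·M_{XY} is {iω : ω is an eigenvalue of X} ∪ {−iω : ω is an eigenvalue of X}; in other words, the symplectic eigenvalues of the positive definite matrix M_{XY} are exactly the eigenvalues ω_1, …, ω_n of X. -/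
/-!
Shearing by `[[1, 0], [Y, 1]]` conjugates `J·M_{XY} = [[Y, 1], [-(X² + Y²), -Y]]` to
`K = [[0, 1], [-X², 0]]`. Since `(μ - K)(μ + K) = diag(μ² + X², μ² + X²)` and `μ + K` is
conjugate to `μ - K`, `μ` is an eigenvalue of `K` exactly when `-μ²` is an eigenvalue of `X²`,
i.e. when `-μ² = ω²` for an eigenvalue `ω` of `X`, which is real because `X` is symmetric.
-/

open Matrix

/-- The Fermi matrix `M_{XY} = [[X² + Y², Y],[Y, I]]`. -/
def fermiMatrix {n : ℕ} (X Y : Matrix (Fin n) (Fin n) ℝ) :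
    Matrix (Fin n ⊕ Fin n) (Fin n ⊕ Fin n) ℝ :=
  fromBlocks (X * X + Y * Y) Y Y 1

namespace Matrix

variable {m : Type*} [DecidableEq m] {R : Type*} [CommRing R]

theorem smul_one_sub_fromBlocks_zero_one (B : Matrix m m R) (μ : R) :
    μ • 1 - fromBlocks 0 (1 : Matrix m m R) B 0 =
      fromBlocks (μ • 1) (-1) (-B) (μ • 1) := by
  rw [← fromBlocks_one, fromBlocks_smul, sub_eq_add_neg, fromBlocks_neg, fromBlocks_add]
  simp

variable [Fintype m]

theorem det_smul_one_sub_fromBlocks_zero_one_sq (B : Matrix m m R) (μ : R) :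
    det (μ • 1 - fromBlocks 0 (1 : Matrix m m R) B 0) ^ 2 = det (μ ^ 2 • 1 - B) ^ 2 := by
  rw [smul_one_sub_fromBlocks_zero_one]
  set T : Matrix (m ⊕ m) (m ⊕ m) R := fromBlocks (μ • 1) (-1) (-B) (μ • 1)
  set S : Matrix (m ⊕ m) (m ⊕ m) R := fromBlocks 1 0 0 (-1)
  have hS : det S ^ 2 = 1 := by
    rw [sq, ← det_mul]
    simp [S, fromBlocks_multiply, fromBlocks_one]
  have hconj : S * T * S = fromBlocks (μ • 1) 1 B (μ • 1) := by
    simp [S, T, fromBlocks_multiply]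
  have hprod : T * fromBlocks (μ • 1) 1 B (μ • 1) =
      fromBlocks (μ ^ 2 • 1 - B) 0 0 (μ ^ 2 • 1 - B) := by
    simp [T, fromBlocks_multiply, smul_smul, sq, sub_eq_add_neg, add_comm]
  calc det T ^ 2 = det (T * (S * T * S)) := by
        rw [det_mul, det_mul, det_mul]
        linear_combination -(det T) ^ 2 * hS
    _ = det (μ ^ 2 • 1 - B) ^ 2 := by
        rw [hconj, hprod, det_fromBlocks_zero₂₁, ← sq]

theorem mem_spectrum_fromBlocks_zero_one_iff (B : Matrix m m R) (μ : R) :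
    μ ∈ spectrum R (fromBlocks 0 (1 : Matrix m m R) B 0) ↔ μ ^ 2 ∈ spectrum R B := by
  rw [spectrum.mem_iff, spectrum.mem_iff, Algebra.algebraMap_eq_smul_one,
    Algebra.algebraMap_eq_smul_one, isUnit_iff_isUnit_det, isUnit_iff_isUnit_det,
    ← isUnit_pow_iff two_ne_zero, det_smul_one_sub_fromBlocks_zero_one_sq,
    isUnit_pow_iff two_ne_zero]

theorem spectrum_fromBlocks_shear (Y B : Matrix m m R) :
    spectrum R (fromBlocks Y 1 (B - Y * Y) (-Y)) =
      spectrum R (fromBlocks 0 (1 : Matrix m m R) B 0) := by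
  let L : (Matrix (m ⊕ m) (m ⊕ m) R)ˣ :=
    ⟨fromBlocks 1 0 Y 1, fromBlocks 1 0 (-Y) 1, by simp [fromBlocks_multiply, ← fromBlocks_one],
      by simp [fromBlocks_multiply, ← fromBlocks_one]⟩
  have hL : fromBlocks Y 1 (B - Y * Y) (-Y) =
      L⁻¹.val * fromBlocks 0 (1 : Matrix m m R) B 0 * L.val := by
    simp [L, fromBlocks_multiply, sub_eq_add_neg]
  rw [hL, spectrum.units_conjugate']

theorem map_mem_spectrum_mapMatrix_iff {K L : Type*} [Field K] [Field L] (f : K →+* L)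
    (A : Matrix m m K) (r : K) : f r ∈ spectrum L (f.mapMatrix A) ↔ r ∈ spectrum K A := by
  simp only [RingHom.mapMatrix_apply, mem_spectrum_iff_isRoot_charpoly, charpoly_map,
    Polynomial.IsRoot.def, Polynomial.eval_map_apply, map_eq_zero]

theorem IsSymm.spectrum_mapMatrix_ofRealHom {A : Matrix m m ℝ} (hA : A.IsSymm) :
    spectrum ℂ (Complex.ofRealHom.mapMatrix A) = ((↑) : ℝ → ℂ) '' spectrum ℝ A := by
  have hAc : (Complex.ofRealHom.mapMatrix A).IsHermitian :=
    (isHermitian_iff_isSymm.2 hA).map _ fun _ ↦ (Complex.conj_ofReal _).symm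
  ext z
  constructor
  · rw [hAc.spectrum_eq_image_range]
    rintro ⟨_, ⟨i, rfl⟩, rfl⟩
    refine ⟨hAc.eigenvalues i, ?_, rfl⟩
    rw [← map_mem_spectrum_mapMatrix_iff Complex.ofRealHom, hAc.spectrum_eq_image_range]
    exact ⟨_, ⟨i, rfl⟩, rfl⟩
  · rintro ⟨r, hr, rfl⟩
    exact (map_mem_spectrum_mapMatrix_iff Complex.ofRealHom A r).2 hr

end Matrix

theorem Complex.sq_eq_neg_sq_iff (ω μ : ℂ) :
    ω ^ 2 = -μ ^ 2 ↔ μ = I * ω ∨ μ = -(I * ω) := by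
  rw [← sq_eq_sq_iff_eq_or_eq_neg, mul_pow, I_sq]
  constructor <;> intro h <;> linear_combination h

theorem stdJ_mul_fermiMatrix {n : ℕ} (X Y : Matrix (Fin n) (Fin n) ℝ) :
    stdJ n * fermiMatrix X Y = fromBlocks Y 1 (-(X * X) - Y * Y) (-Y) := by
  simp [stdJ, fermiMatrix, fromBlocks_multiply, sub_eq_add_neg, add_comm]

theorem mapMatrix_stdJ_mul_fermiMatrix {n : ℕ} {S : Type*} [CommRing S] (f : ℝ →+* S)
    (X Y : Matrix (Fin n) (Fin n) ℝ) :
    f.mapMatrix (stdJ n * fermiMatrix X Y) = fromBlocks (f.mapMatrix Y) 1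
      (-(f.mapMatrix X * f.mapMatrix X) - f.mapMatrix Y * f.mapMatrix Y) (-f.mapMatrix Y) := by
  rw [stdJ_mul_fermiMatrix, ← map_mul, ← map_mul, ← map_neg, ← map_sub, ← map_neg]
  simp [fromBlocks_map]

theorem symplectic_eigenvalues_of_fermi_matrix_general
    (n : ℕ) (X Y : Matrix (Fin n) (Fin n) ℝ)
    (hX : X.IsSymm) :
    spectrum ℂ ((stdJ n * fermiMatrix X Y).map (Complex.ofReal)) =
      {μ : ℂ | ∃ ω ∈ spectrum ℝ X, μ = Complex.I * (ω : ℂ) ∨ μ = -(Complex.I * (ω : ℂ))} := by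
  ext μ
  change μ ∈ spectrum ℂ (Complex.ofRealHom.mapMatrix (stdJ n * fermiMatrix X Y)) ↔ _
  rw [mapMatrix_stdJ_mul_fermiMatrix, spectrum_fromBlocks_shear,
    mem_spectrum_fromBlocks_zero_one_iff, ← spectrum.neg_eq, Set.mem_neg, ← sq,
    spectrum.map_pow_of_pos _ two_pos, hX.spectrum_mapMatrix_ofRealHom,
    Set.image_image]
  simp only [Set.mem_image, Set.mem_ofPred_eq, Complex.sq_eq_neg_sq_iff]

/-- The spectrum of `J·M_{XY}` (as a complex matrix) is
`{iω : ω eigenvalue of X} ∪ {−iω : ω eigenvalue of X}`: the symplectic eigenvalues of the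
positive definite matrix `M_{XY}` are exactly the eigenvalues of `X`. -/
theorem symplectic_eigenvalues_of_fermi_matrix
    (n : ℕ) (hn : 1 ≤ n) (X Y : Matrix (Fin n) (Fin n) ℝ)
    (hX : X.IsSymm) (hY : Y.IsSymm) (hXpd : X.PosDef) :
    spectrum ℂ ((stdJ n * fermiMatrix X Y).map (Complex.ofReal)) =
      {μ : ℂ | ∃ ω ∈ spectrum ℝ X, μ = Complex.I * (ω : ℂ) ∨ μ = -(Complex.I * (ω : ℂ))} :=
  symplectic_eigenvalues_of_fermi_matrix_general n X Y hX
end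

section
/- Let c be any symplectic capacity on ℝ^{2n}, let X, Y be real symmetric n×n matrices with X positive definite, and let Ω_{XY} = {z ∈ ℝ^{2n} : M_{XY} z·z ≤ ℏ Tr X} be the Fermi ellipsoid, where M_{XY} = [[X² + Y², Y],[Y, I]]. Then c(Ω_{XY}) = πℏ (Tr X)/ω_max, where ω_max is the largest eigenvalue of X. -/
/-!
Shearing `p ↦ p + Y x`, rotating both `x` and `p` into an eigenbasis of `X`, and rescaling
`xⱼ ↦ √ωⱼ xⱼ`, `pⱼ ↦ pⱼ / √ωⱼ` is a linear symplectic map taking `Ω_{XY}` onto the normal-form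
ellipsoid `∑ ωⱼ (xⱼ² + pⱼ²) ≤ ℏ Tr X`. With `R² = ℏ Tr X / ω_max`, that ellipsoid contains the
ball `B(R)` and lies in the cylinder of radius `R` over the coordinate pair of `ω_max`, so
monotonicity and normalization force its capacity to be `πR²`.
-/

open Matrix

/-- The closed Euclidean ball `B^{2n}(R)` of radius `R` centered at `0` in `ℝ^{2n}`. -/
def euclBall (n : ℕ) (R : ℝ) : Set (Fin n ⊕ Fin n → ℝ) :=
  {z | ∑ i, (z i) ^ 2 ≤ R ^ 2}

/-- The symplectic cylinder `Z_j(R) = {z : x_j² + p_j² ≤ R²}`. -/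
def symplCyl (n : ℕ) (j : Fin n) (R : ℝ) : Set (Fin n ⊕ Fin n → ℝ) :=
  {z | (z (Sum.inl j)) ^ 2 + (z (Sum.inr j)) ^ 2 ≤ R ^ 2}

/-- A symplectic capacity on `ℝ^{2n}`: a `[0,∞]`-valued function on subsets of phase space that
is monotone, invariant under affine symplectic maps, conformal, and normalized on balls and
cylinders. -/
structure IsSymplecticCapacity (n : ℕ) (c : Set (Fin n ⊕ Fin n → ℝ) → ENNReal) : Prop where
  mono : ∀ Ω Ω' : Set (Fin n ⊕ Fin n → ℝ), Ω ⊆ Ω' → c Ω ≤ c Ω'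
  sympl_inv : ∀ S : Matrix (Fin n ⊕ Fin n) (Fin n ⊕ Fin n) ℝ, IsSymplecticMat S →
    ∀ z₀ : Fin n ⊕ Fin n → ℝ, ∀ Ω : Set (Fin n ⊕ Fin n → ℝ),
      c ((fun z => S.mulVec z + z₀) '' Ω) = c Ω
  conformal : ∀ lam : ℝ, 0 < lam → ∀ Ω : Set (Fin n ⊕ Fin n → ℝ),
    c ((fun z => lam • z) '' Ω) = ENNReal.ofReal (lam ^ 2) * c Ω
  norm_ball : ∀ R : ℝ, 0 < R → c (euclBall n R) = ENNReal.ofReal (Real.pi * R ^ 2)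
  norm_cyl : ∀ (j : Fin n) (R : ℝ), 0 < R →
    c (symplCyl n j R) = ENNReal.ofReal (Real.pi * R ^ 2)


namespace IsSymplecticMat

variable {n : ℕ}

lemma mul {S S' : Matrix (Fin n ⊕ Fin n) (Fin n ⊕ Fin n) ℝ}
    (hS : IsSymplecticMat S) (hS' : IsSymplecticMat S') : IsSymplecticMat (S * S') := by
  unfold IsSymplecticMat at *
  calc (S * S')ᵀ * stdJ n * (S * S') = S'ᵀ * (Sᵀ * stdJ n * S) * S' := by
        simp only [transpose_mul, mul_assoc]
    _ = stdJ n := by rw [hS, hS']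

lemma stdJ_mul_stdJ : stdJ n * stdJ n = -1 := by
  simp [stdJ, fromBlocks_multiply, ← fromBlocks_one, fromBlocks_neg]

lemma mulVec_surjective {S : Matrix (Fin n ⊕ Fin n) (Fin n ⊕ Fin n) ℝ}
    (hS : IsSymplecticMat S) : Function.Surjective S.mulVec := by
  have hleft : (-stdJ n * Sᵀ * stdJ n) * S = 1 := by
    calc (-stdJ n * Sᵀ * stdJ n) * S = -(stdJ n * (Sᵀ * stdJ n * S)) := by
          simp only [neg_mul, mul_assoc]
      _ = 1 := by rw [hS, stdJ_mul_stdJ, neg_neg]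
  intro w
  exact ⟨(-stdJ n * Sᵀ * stdJ n) *ᵥ w, by rw [mulVec_mulVec, mul_eq_one_comm.mp hleft, one_mulVec]⟩

end IsSymplecticMat

lemma isSymplecticMat_fromBlocks_diag {n : ℕ} {A B : Matrix (Fin n) (Fin n) ℝ}
    (h : Aᵀ * B = 1) : IsSymplecticMat (fromBlocks A 0 0 B) := by
  have h' : Bᵀ * A = 1 := by simpa [transpose_mul] using congrArg transpose h
  simp [IsSymplecticMat, stdJ, fromBlocks_transpose, fromBlocks_multiply, h, h']

lemma isSymplecticMat_fromBlocks_shear {n : ℕ} {Y : Matrix (Fin n) (Fin n) ℝ} (hY : Y.IsSymm) :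
    IsSymplecticMat (fromBlocks 1 0 Y 1) := by
  simp [IsSymplecticMat, stdJ, fromBlocks_transpose, fromBlocks_multiply, hY.eq]

lemma fromBlocks_diag_congr {R m n : Type*} [Fintype m] [Fintype n] [CommRing R]
    (A P : Matrix m m R) (B Q : Matrix n n R) :
    (fromBlocks P 0 0 Q)ᵀ * fromBlocks A 0 0 B * fromBlocks P 0 0 Q =
      fromBlocks (Pᵀ * A * P) 0 0 (Qᵀ * B * Q) := by
  simp [fromBlocks_transpose, fromBlocks_multiply]

lemma fromBlocks_fermi_eq_shear_congr {n : ℕ} (X : Matrix (Fin n) (Fin n) ℝ)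
    {Y : Matrix (Fin n) (Fin n) ℝ} (hY : Y.IsSymm) :
    fromBlocks (X * X + Y * Y) Y Y 1 =
      (fromBlocks 1 0 Y 1)ᵀ * fromBlocks (X * X) 0 0 1 * fromBlocks 1 0 Y 1 := by
  simp [fromBlocks_transpose, fromBlocks_multiply, hY.eq]

lemma Matrix.PosDef.exists_isSymplecticMat_fromBlocks_sq_eq {n : ℕ}
    {X : Matrix (Fin n) (Fin n) ℝ} (hX : X.PosDef) :
    ∃ S, IsSymplecticMat S ∧
      fromBlocks (X * X) 0 0 1 =
        Sᵀ * diagonal (Sum.elim hX.1.eigenvalues hX.1.eigenvalues) * S := by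
  set d := hX.1.eigenvalues
  set O : Matrix (Fin n) (Fin n) ℝ := (hX.1.eigenvectorUnitary : Matrix (Fin n) (Fin n) ℝ)
  have hXO : X = O * diagonal d * Oᵀ := by
    simpa [Unitary.conjStarAlgAut_apply, RCLike.ofReal_real_eq_id, star_eq_conjTranspose]
      using hX.1.spectral_theorem
  have hOOt : O * Oᵀ = 1 := by
    simpa [star_eq_conjTranspose] using
      (Matrix.mem_unitaryGroup_iff.mp hX.1.eigenvectorUnitary.2)
  have hOtO : Oᵀ * O = 1 := mul_eq_one_comm.mp hOOt
  have hd : ∀ j, 0 < d j := hX.eigenvalues_pos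
  have hsqrt : ∀ j, Real.sqrt (d j) * Real.sqrt (d j) = d j :=
    fun j => Real.mul_self_sqrt (hd j).le
  set A := diagonal (fun j => Real.sqrt (d j)) * Oᵀ
  set B := diagonal (fun j => (Real.sqrt (d j))⁻¹) * Oᵀ
  refine ⟨fromBlocks A 0 0 B, isSymplecticMat_fromBlocks_diag ?_, ?_⟩
  · simp only [A, B, transpose_mul, transpose_transpose, diagonal_transpose, mul_assoc]
    rw [← mul_assoc (diagonal _), diagonal_mul_diagonal]
    simp [Real.sqrt_ne_zero', hd, hOOt]
  · have hXX : X * X = O * diagonal (fun j => d j * d j) * Oᵀ := by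
      rw [hXO, ← diagonal_mul_diagonal]
      simp only [mul_assoc, ← mul_assoc Oᵀ O, hOtO, Matrix.one_mul]
    have hconj : ∀ s : Fin n → ℝ, (diagonal s * Oᵀ)ᵀ * diagonal d * (diagonal s * Oᵀ) =
        O * diagonal (fun j => s j * d j * s j) * Oᵀ := fun s => by
      simp only [transpose_mul, transpose_transpose, diagonal_transpose,
        ← diagonal_mul_diagonal, mul_assoc]
    have hsq : (fun j => Real.sqrt (d j) * d j * Real.sqrt (d j)) = fun j => d j * d j :=
      funext fun j => by rw [mul_right_comm, hsqrt]
    have hone : (fun j => (Real.sqrt (d j))⁻¹ * d j * (Real.sqrt (d j))⁻¹) = fun _ => 1 :=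
      funext fun j => by
        rw [mul_right_comm, ← mul_inv, hsqrt, inv_mul_cancel₀ (hd j).ne']
    rw [← fromBlocks_diagonal, fromBlocks_diag_congr, hconj, hconj, hXX, hsq, hone,
      diagonal_one, Matrix.mul_one, hOOt]

lemma exists_isSymplecticMat_fermi_eq {n : ℕ} {X Y : Matrix (Fin n) (Fin n) ℝ}
    (hX : X.PosDef) (hY : Y.IsSymm) :
    ∃ T, IsSymplecticMat T ∧
      fromBlocks (X * X + Y * Y) Y Y 1 =
        Tᵀ * diagonal (Sum.elim hX.1.eigenvalues hX.1.eigenvalues) * T := by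
  obtain ⟨S, hS, hXS⟩ := hX.exists_isSymplecticMat_fromBlocks_sq_eq
  refine ⟨S * fromBlocks 1 0 Y 1, hS.mul (isSymplecticMat_fromBlocks_shear hY), ?_⟩
  rw [fromBlocks_fermi_eq_shear_congr X hY, hXS]
  simp only [transpose_mul, mul_assoc]

lemma setOf_dotProduct_mulVec_le_eq_preimage {ι : Type*} [Fintype ι]
    {M T D : Matrix ι ι ℝ} (hM : M = Tᵀ * D * T) (r : ℝ) :
    {z | z ⬝ᵥ M *ᵥ z ≤ r} = T.mulVec ⁻¹' {w | w ⬝ᵥ D *ᵥ w ≤ r} := by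
  ext z
  simp only [Set.mem_ofPred_eq, Set.mem_preimage, hM, mul_assoc, ← mulVec_mulVec,
    dotProduct_mulVec, vecMul_transpose]

lemma dotProduct_diagonal_sumElim_mulVec {n : ℕ} (d : Fin n → ℝ) (w : Fin n ⊕ Fin n → ℝ) :
    w ⬝ᵥ diagonal (Sum.elim d d) *ᵥ w = ∑ j, d j * (w (Sum.inl j) ^ 2 + w (Sum.inr j) ^ 2) := by
  simp only [dotProduct, mulVec_diagonal, Fintype.sum_sum_type, ← Finset.sum_add_distrib]
  exact Finset.sum_congr rfl fun j _ => by simp only [Sum.elim_inl, Sum.elim_inr]; ring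

lemma sum_sq_sumElim {n : ℕ} (w : Fin n ⊕ Fin n → ℝ) :
    ∑ i, w i ^ 2 = ∑ j, (w (Sum.inl j) ^ 2 + w (Sum.inr j) ^ 2) := by
  rw [Fintype.sum_sum_type, ← Finset.sum_add_distrib]

namespace IsSymplecticCapacity

variable {n : ℕ} {c : Set (Fin n ⊕ Fin n → ℝ) → ENNReal}

lemma apply_preimage_mulVec (hc : IsSymplecticCapacity n c)
    {T : Matrix (Fin n ⊕ Fin n) (Fin n ⊕ Fin n) ℝ} (hT : IsSymplecticMat T)
    (Ω : Set (Fin n ⊕ Fin n → ℝ)) : c (T.mulVec ⁻¹' Ω) = c Ω := by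
  simpa [Set.image_preimage_eq Ω hT.mulVec_surjective] using
    (hc.sympl_inv T hT 0 (T.mulVec ⁻¹' Ω)).symm

lemma apply_eq_of_ball_subset_of_subset_cyl (hc : IsSymplecticCapacity n c)
    {Ω : Set (Fin n ⊕ Fin n → ℝ)} {j : Fin n} {R : ℝ} (hR : 0 < R)
    (hball : euclBall n R ⊆ Ω) (hcyl : Ω ⊆ symplCyl n j R) :
    c Ω = ENNReal.ofReal (Real.pi * R ^ 2) :=
  le_antisymm (hc.norm_cyl j R hR ▸ hc.mono _ _ hcyl) (hc.norm_ball R hR ▸ hc.mono _ _ hball)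

lemma apply_setOf_diagonal_le (hc : IsSymplecticCapacity n c) {d : Fin n → ℝ}
    (hd : ∀ j, 0 ≤ d j) {j₀ : Fin n} (hj₀ : 0 < d j₀) (hmax : ∀ j, d j ≤ d j₀)
    {r : ℝ} (hr : 0 < r) :
    c {w | w ⬝ᵥ diagonal (Sum.elim d d) *ᵥ w ≤ r} = ENNReal.ofReal (Real.pi * r / d j₀) := by
  have hR2 : Real.sqrt (r / d j₀) ^ 2 = r / d j₀ := Real.sq_sqrt (by positivity)
  rw [mul_div_assoc, ← hR2]
  refine hc.apply_eq_of_ball_subset_of_subset_cyl (j := j₀)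
    (Real.sqrt_pos.mpr (by positivity)) ?_ ?_
  · intro w hw
    simp only [euclBall, Set.mem_ofPred_eq, hR2, le_div_iff₀ hj₀, sum_sq_sumElim] at hw ⊢
    rw [dotProduct_diagonal_sumElim_mulVec]
    calc ∑ j, d j * (w (Sum.inl j) ^ 2 + w (Sum.inr j) ^ 2)
        ≤ ∑ j, d j₀ * (w (Sum.inl j) ^ 2 + w (Sum.inr j) ^ 2) :=
          Finset.sum_le_sum fun j _ => mul_le_mul_of_nonneg_right (hmax j) (by positivity)
      _ ≤ r := by rw [← Finset.mul_sum]; linarith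
  · intro w hw
    simp only [symplCyl, Set.mem_ofPred_eq, hR2, le_div_iff₀ hj₀,
      dotProduct_diagonal_sumElim_mulVec] at hw ⊢
    calc (w (Sum.inl j₀) ^ 2 + w (Sum.inr j₀) ^ 2) * d j₀
        ≤ ∑ j, d j * (w (Sum.inl j) ^ 2 + w (Sum.inr j) ^ 2) := by
          rw [mul_comm]
          exact Finset.single_le_sum (f := fun j => d j * (w (Sum.inl j) ^ 2 + w (Sum.inr j) ^ 2))
            (fun j _ => mul_nonneg (hd j) (by positivity)) (Finset.mem_univ j₀)
      _ ≤ r := hw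

end IsSymplecticCapacity

theorem capacity_of_fermi_ellipsoid_general
    (n : ℕ) (ℏ : ℝ) (hℏ : 0 < ℏ)
    (c : Set (Fin n ⊕ Fin n → ℝ) → ENNReal) (hc : IsSymplecticCapacity n c)
    (X Y : Matrix (Fin n) (Fin n) ℝ)
    (hY : Y.IsSymm) (hXpd : X.PosDef)
    (ωmax : ℝ) (hω : IsGreatest (spectrum ℝ X) ωmax) :
    c {z | z ⬝ᵥ (fromBlocks (X * X + Y * Y) Y Y 1).mulVec z ≤ ℏ * X.trace} =
      ENNReal.ofReal (Real.pi * ℏ * X.trace / ωmax) := by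
  obtain ⟨T, hT, hM⟩ := exists_isSymplecticMat_fermi_eq hXpd hY
  have hspec := hXpd.1.spectrum_real_eq_range_eigenvalues
  obtain ⟨j₀, rfl⟩ := hspec ▸ hω.1
  have : Nonempty (Fin n) := ⟨j₀⟩
  rw [setOf_dotProduct_mulVec_le_eq_preimage hM, hc.apply_preimage_mulVec hT, mul_assoc,
    hc.apply_setOf_diagonal_le (fun j => (hXpd.eigenvalues_pos j).le) (hXpd.eigenvalues_pos j₀)
      (fun j => hω.2 (hspec ▸ Set.mem_range_self j)) (mul_pos hℏ hXpd.trace_pos)]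

/-- The symplectic capacity of the Fermi ellipsoid
`Ω_{XY} = {z : M_{XY} z·z ≤ ℏ Tr X}` (with `M_{XY} = [[X² + Y², Y],[Y, I]]`) equals
`πℏ (Tr X)/ω_max`, where `ω_max` is the largest eigenvalue of `X`. -/
theorem capacity_of_fermi_ellipsoid
    (n : ℕ) (hn : 1 ≤ n) (ℏ : ℝ) (hℏ : 0 < ℏ)
    (c : Set (Fin n ⊕ Fin n → ℝ) → ENNReal) (hc : IsSymplecticCapacity n c)
    (X Y : Matrix (Fin n) (Fin n) ℝ)
    (hX : X.IsSymm) (hY : Y.IsSymm) (hXpd : X.PosDef)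
    (ωmax : ℝ) (hω : IsGreatest (spectrum ℝ X) ωmax) :
    c {z | z ⬝ᵥ (fromBlocks (X * X + Y * Y) Y Y 1).mulVec z ≤ ℏ * X.trace} =
      ENNReal.ofReal (Real.pi * ℏ * X.trace / ωmax) :=
  capacity_of_fermi_ellipsoid_general n ℏ hℏ c hc X Y hY hXpd ωmax hω
end

section
/- Let c be any symplectic capacity on ℝ^{2n}, let X, Y be real symmetric n×n matrices with X positive definite, and let Ω_{XY} = {z ∈ ℝ^{2n} : M_{XY} z·z ≤ ℏ Tr X} with M_{XY} = [[X² + Y², Y],[Y, I]]. Then (1/2)h ≤ c(Ω_{XY}) ≤ n h/2, where h = 2πℏ; moreover, if all eigenvalues of X are equal, then c(Ω_{XY}) = n h/2. -/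
open Matrix

/-! The shear `(x, p) ↦ (x, p - Y x)` is symplectic and reduces `M_{XY}` to `diag(X², I)`.
Diagonalizing `X = Q D Qᵀ` orthogonally and rescaling by `diag(D^{-1/2}, D^{1/2})`, `Ω_{XY}` is
symplectically equivalent to the ellipsoid `∑ dⱼ (xⱼ² + pⱼ²) ≤ ℏ ∑ dⱼ`. With `d_k = max dⱼ`, this
ellipsoid contains the ball and lies in the `k`-th cylinder of radius `R² = ℏ ∑ dⱼ / d_k`, so its
capacity is `π R²`, and `1 ≤ ∑ dⱼ / d_k ≤ n` with equality on the right when all `dⱼ` coincide. -/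

section Symplectic

variable {n : ℕ}

lemma stdJ_mul_stdJ : stdJ n * stdJ n = -1 := by
  simp [stdJ, fromBlocks_multiply, ← fromBlocks_one, fromBlocks_neg]

lemma IsSymplecticMat.mul_inverse {S : Matrix (Fin n ⊕ Fin n) (Fin n ⊕ Fin n) ℝ}
    (hS : IsSymplecticMat S) : S * -(stdJ n * Sᵀ * stdJ n) = 1 :=
  mul_eq_one_comm.mp <| by
    rw [Matrix.neg_mul, Matrix.mul_assoc, Matrix.mul_assoc, ← Matrix.mul_assoc Sᵀ, hS,
      stdJ_mul_stdJ, neg_neg]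

lemma isSymplecticMat_fromBlocks_lower {A C D : Matrix (Fin n) (Fin n) ℝ}
    (hAC : Cᵀ * A = Aᵀ * C) (hAD : Aᵀ * D = 1) : IsSymplecticMat (fromBlocks A 0 C D) := by
  have hDA : Dᵀ * A = 1 := by rw [← transpose_transpose A, ← transpose_mul, hAD, transpose_one]
  simp [IsSymplecticMat, stdJ, fromBlocks_transpose, fromBlocks_multiply, hAC, hAD, hDA]

end Symplectic

lemma image_mulVec_quadSublevel {m : Type*} [Fintype m] [DecidableEq m] {S S' : Matrix m m ℝ}
    (hS : S * S' = 1) (M : Matrix m m ℝ) (a : ℝ) :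
    (S *ᵥ ·) '' {w | w ⬝ᵥ (Sᵀ * M * S) *ᵥ w ≤ a} = {z | z ⬝ᵥ M *ᵥ z ≤ a} := by
  have hform : ∀ w, w ⬝ᵥ (Sᵀ * M * S) *ᵥ w = (S *ᵥ w) ⬝ᵥ M *ᵥ (S *ᵥ w) := fun w => by
    rw [Matrix.mul_assoc, ← mulVec_mulVec, dotProduct_mulVec w Sᵀ, vecMul_transpose,
      ← mulVec_mulVec]
  ext z
  constructor
  · rintro ⟨w, hw, rfl⟩
    simpa [hform] using hw
  · intro hz
    have hSS' : S *ᵥ (S' *ᵥ z) = z := by rw [mulVec_mulVec, hS, one_mulVec]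
    exact ⟨S' *ᵥ z, by show _ ≤ a; rwa [hform, hSS'], hSS'⟩

namespace IsSymplecticCapacity

variable {n : ℕ} {c : Set (Fin n ⊕ Fin n → ℝ) → ENNReal}

lemma quadSublevel_conj (hc : IsSymplecticCapacity n c)
    {S : Matrix (Fin n ⊕ Fin n) (Fin n ⊕ Fin n) ℝ} (hS : IsSymplecticMat S)
    (M : Matrix (Fin n ⊕ Fin n) (Fin n ⊕ Fin n) ℝ) (a : ℝ) :
    c {z | z ⬝ᵥ M *ᵥ z ≤ a} = c {w | w ⬝ᵥ (Sᵀ * M * S) *ᵥ w ≤ a} := by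
  rw [← image_mulVec_quadSublevel hS.mul_inverse M a]
  simpa using hc.sympl_inv S hS 0 _

end IsSymplecticCapacity

section BlockConjugation

variable {n : ℕ}

lemma fromBlocks_shear_conj {P Y : Matrix (Fin n) (Fin n) ℝ} (hY : Yᵀ = Y) :
    (fromBlocks 1 0 (-Y) 1)ᵀ * fromBlocks (P + Y * Y) Y Y 1 * fromBlocks 1 0 (-Y) 1 =
      fromBlocks P 0 0 1 := by
  simp [fromBlocks_transpose, fromBlocks_multiply, hY]

lemma fromBlocks_diag_conj (A B P R : Matrix (Fin n) (Fin n) ℝ) :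
    (fromBlocks A 0 0 B)ᵀ * fromBlocks P 0 0 R * fromBlocks A 0 0 B =
      fromBlocks (Aᵀ * P * A) 0 0 (Bᵀ * R * B) := by
  simp [fromBlocks_transpose, fromBlocks_multiply, Matrix.mul_assoc]

end BlockConjugation

section DiagEllipsoid

variable {n : ℕ}

def diagEllipsoid (d : Fin n → ℝ) (a : ℝ) : Set (Fin n ⊕ Fin n → ℝ) :=
  {w | ∑ j, d j * (w (.inl j) ^ 2 + w (.inr j) ^ 2) ≤ a}

lemma quadSublevel_diagonal_sumElim (d : Fin n → ℝ) (a : ℝ) :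
    {w | w ⬝ᵥ diagonal (Sum.elim d d) *ᵥ w ≤ a} = diagEllipsoid d a := by
  ext w
  simp only [Set.mem_ofPred_eq, diagEllipsoid, dotProduct, mulVec_diagonal,
    Fintype.sum_sum_type, Sum.elim_inl, Sum.elim_inr, ← Finset.sum_add_distrib, mul_add, sq,
    mul_comm (w _) (d _ * w _), mul_assoc]

lemma euclBall_subset_diagEllipsoid {d : Fin n → ℝ} {μ : ℝ} (hdμ : ∀ j, d j ≤ μ) (hμ : 0 ≤ μ)
    (R : ℝ) : euclBall n R ⊆ diagEllipsoid d (μ * R ^ 2) := fun w hw =>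
  calc ∑ j, d j * (w (.inl j) ^ 2 + w (.inr j) ^ 2)
      ≤ ∑ j, μ * (w (.inl j) ^ 2 + w (.inr j) ^ 2) :=
        Finset.sum_le_sum fun j _ => mul_le_mul_of_nonneg_right (hdμ j) (by positivity)
    _ = μ * ∑ i, w i ^ 2 := by
      rw [← Finset.mul_sum, Fintype.sum_sum_type, Finset.sum_add_distrib]
    _ ≤ μ * R ^ 2 := mul_le_mul_of_nonneg_left hw hμ

lemma diagEllipsoid_subset_symplCyl {d : Fin n → ℝ} (hd : ∀ j, 0 ≤ d j) {k : Fin n}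
    (hk : 0 < d k) (R : ℝ) : diagEllipsoid d (d k * R ^ 2) ⊆ symplCyl n k R := fun w hw =>
  le_of_mul_le_mul_left
    ((Finset.single_le_sum (fun j _ => mul_nonneg (hd j) (by positivity))
      (Finset.mem_univ k)).trans hw) hk

lemma IsSymplecticCapacity.diagEllipsoid_eq {c : Set (Fin n ⊕ Fin n → ℝ) → ENNReal}
    (hc : IsSymplecticCapacity n c) {d : Fin n → ℝ} (hd : ∀ j, 0 ≤ d j) {k : Fin n}
    (hk : 0 < d k) (hmax : ∀ j, d j ≤ d k) {a : ℝ} (ha : 0 < a) :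
    c (diagEllipsoid d a) = ENNReal.ofReal (Real.pi * (a / d k)) := by
  obtain ⟨R, hR, hRa⟩ : ∃ R : ℝ, 0 < R ∧ R ^ 2 = a / d k :=
    ⟨√(a / d k), by positivity, Real.sq_sqrt (by positivity)⟩
  have hdiag : diagEllipsoid d a = diagEllipsoid d (d k * R ^ 2) := by
    rw [hRa, mul_div_cancel₀ _ hk.ne']
  rw [← hRa]
  refine le_antisymm ?_ ?_
  · rw [← hc.norm_cyl k R hR, hdiag]
    exact hc.mono _ _ (diagEllipsoid_subset_symplCyl hd hk R)
  · rw [← hc.norm_ball R hR, hdiag]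
    exact hc.mono _ _ (euclBall_subset_diagEllipsoid hmax hk.le R)

end DiagEllipsoid

lemma exists_orthogonal_diagonal_of_posDef {m : Type*} [Fintype m] [DecidableEq m]
    {X : Matrix m m ℝ} (hX : X.PosDef) :
    ∃ (Q : Matrix m m ℝ) (d : m → ℝ), Qᵀ * Q = 1 ∧ X = Q * diagonal d * Qᵀ ∧
      (∀ i, 0 < d i) ∧ ∀ i, d i ∈ spectrum ℝ X := by
  refine ⟨hX.1.eigenvectorUnitary, hX.1.eigenvalues, ?_, ?_, hX.eigenvalues_pos,
    hX.1.eigenvalues_mem_spectrum_real⟩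
  · simpa [star_eq_conjTranspose] using
      (mem_unitaryGroup_iff').mp hX.1.eigenvectorUnitary.2
  · simpa [star_eq_conjTranspose, Function.comp_def] using hX.1.spectral_theorem

lemma IsSymplecticCapacity.fermiEllipsoid_eq_diagEllipsoid {n : ℕ}
    {c : Set (Fin n ⊕ Fin n → ℝ) → ENNReal} (hc : IsSymplecticCapacity n c)
    {Q Y : Matrix (Fin n) (Fin n) ℝ} {d : Fin n → ℝ} (hQ : Qᵀ * Q = 1) (hY : Yᵀ = Y)
    (hd : ∀ i, 0 < d i) (a : ℝ) :
    c {z | z ⬝ᵥ fromBlocks ((Q * diagonal d * Qᵀ) * (Q * diagonal d * Qᵀ) + Y * Y) Y Y 1 *ᵥ z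
      ≤ a} = c (diagEllipsoid d a) := by
  set e : Fin n → ℝ := fun i => √(d i)
  have he : ∀ i, e i ≠ 0 := fun i => (Real.sqrt_pos.mpr (hd i)).ne'
  have hee : ∀ i, e i * e i = d i := fun i => Real.mul_self_sqrt (hd i).le
  have hshear : IsSymplecticMat (fromBlocks 1 0 (-Y) 1) :=
    isSymplecticMat_fromBlocks_lower (by simp [hY]) (by simp)
  have hrot : IsSymplecticMat (fromBlocks Q 0 0 Q) :=
    isSymplecticMat_fromBlocks_lower (by simp) hQ
  have hscale : IsSymplecticMat (fromBlocks (diagonal fun i => (e i)⁻¹) 0 0 (diagonal e)) :=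
    isSymplecticMat_fromBlocks_lower (by simp) (by simp [diagonal_mul_diagonal, he])
  rw [hc.quadSublevel_conj hshear, fromBlocks_shear_conj hY, hc.quadSublevel_conj hrot,
    fromBlocks_diag_conj, hc.quadSublevel_conj hscale, fromBlocks_diag_conj]
  have hQDQ : Qᵀ * (Q * diagonal d * Qᵀ * (Q * diagonal d * Qᵀ)) * Q = diagonal (d * d) := by
    simp only [Matrix.mul_assoc, ← Matrix.mul_assoc Qᵀ Q, hQ, Matrix.one_mul, Matrix.mul_one,
      diagonal_mul_diagonal]
    rfl
  rw [hQDQ, Matrix.mul_one, hQ]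
  simp only [diagonal_transpose, diagonal_mul_diagonal, Matrix.mul_one]
  have hd₁ : (fun i => (e i)⁻¹ * (d * d) i * (e i)⁻¹) = d := funext fun i => by
    simp only [Pi.mul_apply, ← hee i]
    field_simp [he i]
  rw [fromBlocks_diagonal, hd₁, funext hee, quadSublevel_diagonal_sumElim]

theorem capacity_of_fermi_ellipsoid_bounds_general
    (n : ℕ) (hn : 1 ≤ n) (ℏ : ℝ) (hℏ : 0 < ℏ)
    (c : Set (Fin n ⊕ Fin n → ℝ) → ENNReal) (hc : IsSymplecticCapacity n c)
    (X Y : Matrix (Fin n) (Fin n) ℝ)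
    (hY : Y.IsSymm) (hXpd : X.PosDef) :
    ENNReal.ofReal ((2 * Real.pi * ℏ) / 2) ≤
        c {z | z ⬝ᵥ (fromBlocks (X * X + Y * Y) Y Y 1).mulVec z ≤ ℏ * X.trace} ∧
      c {z | z ⬝ᵥ (fromBlocks (X * X + Y * Y) Y Y 1).mulVec z ≤ ℏ * X.trace} ≤
        ENNReal.ofReal (n * (2 * Real.pi * ℏ) / 2) ∧
      ((∀ a ∈ spectrum ℝ X, ∀ b ∈ spectrum ℝ X, a = b) →
        c {z | z ⬝ᵥ (fromBlocks (X * X + Y * Y) Y Y 1).mulVec z ≤ ℏ * X.trace} =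
          ENNReal.ofReal (n * (2 * Real.pi * ℏ) / 2)) := by
  obtain ⟨Q, d, hQ, rfl, hd, hspec⟩ := exists_orthogonal_diagonal_of_posDef hXpd
  have : Nonempty (Fin n) := ⟨⟨0, hn⟩⟩
  obtain ⟨k, hk⟩ := Finite.exists_max d
  have htr : (Q * diagonal d * Qᵀ).trace = ∑ j, d j := by
    rw [trace_mul_cycle, hQ, Matrix.one_mul, trace_diagonal]
  have hsum_pos : 0 < ∑ j, d j := Finset.sum_pos (fun j _ => hd j) Finset.univ_nonempty
  rw [hc.fermiEllipsoid_eq_diagEllipsoid hQ hY.eq hd, htr,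
    hc.diagEllipsoid_eq (fun j => (hd j).le) (hd k) hk (mul_pos hℏ hsum_pos)]
  have hratio_ge : 1 ≤ (∑ j, d j) / d k :=
    (one_le_div (hd k)).mpr (Finset.single_le_sum (fun j _ => (hd j).le) (Finset.mem_univ k))
  have hratio_le : (∑ j, d j) / d k ≤ n := (div_le_iff₀ (hd k)).mpr <| by
    simpa using Finset.sum_le_card_nsmul Finset.univ d (d k) fun j _ => hk j
  rw [mul_div_assoc ℏ]
  refine ⟨ENNReal.ofReal_le_ofReal ?_, ENNReal.ofReal_le_ofReal ?_, fun hX => ?_⟩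
  · linarith [mul_le_mul_of_nonneg_left hratio_ge (mul_pos Real.pi_pos hℏ).le]
  · linarith [mul_le_mul_of_nonneg_left hratio_le (mul_pos Real.pi_pos hℏ).le]
  · have hratio : (∑ j, d j) / d k = n := by
      rw [div_eq_iff (hd k).ne', Finset.sum_congr rfl fun j _ => hX _ (hspec j) _ (hspec k)]
      simp
    rw [hratio]
    congr 1
    ring

/-- The symplectic capacity of a Fermi ellipsoid satisfies `h/2 ≤ c(Ω_{XY}) ≤ nh/2`
(`h = 2πℏ`), with equality `c(Ω_{XY}) = nh/2` when all eigenvalues of `X` coincide. -/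
theorem capacity_of_fermi_ellipsoid_bounds
    (n : ℕ) (hn : 1 ≤ n) (ℏ : ℝ) (hℏ : 0 < ℏ)
    (c : Set (Fin n ⊕ Fin n → ℝ) → ENNReal) (hc : IsSymplecticCapacity n c)
    (X Y : Matrix (Fin n) (Fin n) ℝ)
    (hX : X.IsSymm) (hY : Y.IsSymm) (hXpd : X.PosDef) :
    ENNReal.ofReal ((2 * Real.pi * ℏ) / 2) ≤
        c {z | z ⬝ᵥ (fromBlocks (X * X + Y * Y) Y Y 1).mulVec z ≤ ℏ * X.trace} ∧
      c {z | z ⬝ᵥ (fromBlocks (X * X + Y * Y) Y Y 1).mulVec z ≤ ℏ * X.trace} ≤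
        ENNReal.ofReal (n * (2 * Real.pi * ℏ) / 2) ∧
      ((∀ a ∈ spectrum ℝ X, ∀ b ∈ spectrum ℝ X, a = b) →
        c {z | z ⬝ᵥ (fromBlocks (X * X + Y * Y) Y Y 1).mulVec z ≤ ℏ * X.trace} =
          ENNReal.ofReal (n * (2 * Real.pi * ℏ) / 2)) :=
  capacity_of_fermi_ellipsoid_bounds_general n hn ℏ hℏ c hc X Y hY hXpd
end

section
/- (Symplectic covariance of Lagrangian polar duality.) Let K be a centrally symmetric convex subset of ℓ_X = ℝⁿ × {0} ⊆ ℝ^{2n}. Then its Lagrangian polar dual with respect to ℓ_P = {0} × ℝⁿ, namely K^{ℏ,ℓ_P} = {z ∈ ℓ_P : σ(z, z′) ≤ ℏ for all z′ ∈ K}, equals {(0,p) : p·x ≤ ℏ for all (x,0) ∈ K} (the ordinary ℏ-polar dual); and for every symplectic 2n×2n matrix S, with ℓ = S(ℓ_X) and ℓ′ = S(ℓ_P), the Lagrangian polar dual of S(K) in ℓ′, i.e. {z ∈ ℓ′ : σ(z, z′) ≤ ℏ for all z′ ∈ S(K)}, equals S(K^{ℏ,ℓ_P}). -/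
open Matrix

/-- The standard symplectic form `σ(z,z′) = p·x′ − p′·x = Jz·z′`. -/
def symplForm {n : ℕ} (z z' : Fin n ⊕ Fin n → ℝ) : ℝ :=
  (stdJ n).mulVec z ⬝ᵥ z'

/-- The Lagrangian coordinate plane `ℓ_X = ℝⁿ × {0}`. -/
def lagX (n : ℕ) : Set (Fin n ⊕ Fin n → ℝ) := {z | ∀ j, z (Sum.inr j) = 0}

/-- The Lagrangian coordinate plane `ℓ_P = {0} × ℝⁿ`. -/
def lagP (n : ℕ) : Set (Fin n ⊕ Fin n → ℝ) := {z | ∀ j, z (Sum.inl j) = 0}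

/-- The Lagrangian polar dual of `K ⊆ ℓ` in `ℓ′`: `{z ∈ ℓ′ : σ(z,z′) ≤ ℏ for all z′ ∈ K}`. -/
def lagPolarDual {n : ℕ} (ℏ : ℝ) (K ℓ' : Set (Fin n ⊕ Fin n → ℝ)) :
    Set (Fin n ⊕ Fin n → ℝ) :=
  {z ∈ ℓ' | ∀ z' ∈ K, symplForm z z' ≤ ℏ}


lemma stdJ_mulVec {n : ℕ} (z : Fin n ⊕ Fin n → ℝ) :
    (stdJ n).mulVec z = Sum.elim (fun i => z (Sum.inr i)) (fun i => -z (Sum.inl i)) := by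
  funext i
  cases i with
  | inl i =>
      simp [stdJ, mulVec, dotProduct, Fintype.sum_sum_type, one_apply, Finset.sum_ite_eq']
  | inr i =>
      simp [stdJ, mulVec, dotProduct, Fintype.sum_sum_type, one_apply, Finset.sum_ite_eq']

lemma symplForm_eq {n : ℕ} (z z' : Fin n ⊕ Fin n → ℝ) :
    symplForm z z' = (∑ i, z (Sum.inr i) * z' (Sum.inl i)) -
      ∑ i, z (Sum.inl i) * z' (Sum.inr i) := by
  simp [symplForm, stdJ_mulVec, dotProduct, Fintype.sum_sum_type, sub_eq_add_neg,
    ← Finset.sum_neg_distrib]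

lemma symplForm_mulVec {n : ℕ} {S : Matrix (Fin n ⊕ Fin n) (Fin n ⊕ Fin n) ℝ}
    (hS : IsSymplecticMat S) (z z' : Fin n ⊕ Fin n → ℝ) :
    symplForm (S.mulVec z) (S.mulVec z') = symplForm z z' := by
  unfold symplForm
  rw [mulVec_mulVec, dotProduct_mulVec, ← mulVec_transpose, mulVec_mulVec, ← mul_assoc, hS]

/-- Symplectic covariance of Lagrangian polar duality: for a centrally symmetric convex
`K ⊆ ℓ_X`, the Lagrangian polar dual of `K` in `ℓ_P` is the ordinary `ℏ`-polar dual
`{(0,p) : p·x ≤ ℏ for all (x,0) ∈ K}`, and for every symplectic `S`, the Lagrangian polar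
dual of `S(K)` in `S(ℓ_P)` equals `S(K^{ℏ,ℓ_P})`. -/
theorem lagrangian_polar_duality_covariance
    (n : ℕ) (hn : 1 ≤ n) (ℏ : ℝ) (hℏ : 0 < ℏ)
    (K : Set (Fin n ⊕ Fin n → ℝ)) (hKsub : K ⊆ lagX n)
    (hKconv : Convex ℝ K) (hKsymm : ∀ z ∈ K, -z ∈ K) :
    lagPolarDual ℏ K (lagP n) =
        {z | (∀ j, z (Sum.inl j) = 0) ∧
          ∀ z' ∈ K, (∑ j, z (Sum.inr j) * z' (Sum.inl j)) ≤ ℏ} ∧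
      ∀ S : Matrix (Fin n ⊕ Fin n) (Fin n ⊕ Fin n) ℝ, IsSymplecticMat S →
        lagPolarDual ℏ (S.mulVec '' K) (S.mulVec '' lagP n) =
          S.mulVec '' lagPolarDual ℏ K (lagP n) := by
  have key : ∀ (z z' : Fin n ⊕ Fin n → ℝ), z' ∈ K →
      symplForm z z' = ∑ j, z (Sum.inr j) * z' (Sum.inl j) := by
    intro z z' hz'
    rw [symplForm_eq]
    have : ∀ i, z' (Sum.inr i) = 0 := hKsub hz'
    simp [this]
  constructor
  · ext z
    constructor
    · rintro ⟨hz, h⟩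
      exact ⟨hz, fun z' hz' => (key z z' hz') ▸ h z' hz'⟩
    · rintro ⟨hz, h⟩
      exact ⟨hz, fun z' hz' => (key z z' hz') ▸ h z' hz'⟩
  · intro S hS
    ext z
    constructor
    · rintro ⟨⟨w, hw, rfl⟩, h⟩
      exact ⟨w, ⟨hw, fun z' hz' => by
        rw [← symplForm_mulVec hS]
        exact h _ ⟨z', hz', rfl⟩⟩, rfl⟩
    · rintro ⟨w, ⟨hw, h⟩, rfl⟩
      refine ⟨⟨w, hw, rfl⟩, ?_⟩
      rintro _ ⟨z', hz', rfl⟩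
      rw [symplForm_mulVec hS]
      exact h z' hz'
end

section
/- The John ellipsoid of B_X^n(√ℏ) × B_P^n(√ℏ) is B^{2n}(√ℏ): if E = z₀ + T(B^{2n}(1)) is any ellipsoid in ℝ^{2n} (z₀ ∈ ℝ^{2n}, T an invertible linear map) with E ⊆ B_X^n(√ℏ) × B_P^n(√ℏ), then the Lebesgue volume of E is at most the volume of B^{2n}(√ℏ), with equality if and only if E = B^{2n}(√ℏ). -/
open Matrix MeasureTheory

/-- The product `B_X^n(√ℏ) × B_P^n(√ℏ)` of the configuration- and momentum-space balls. -/
def ballProd (n : ℕ) (ℏ : ℝ) : Set (Fin n ⊕ Fin n → ℝ) :=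
  {z | (∑ j, (z (Sum.inl j)) ^ 2 ≤ ℏ) ∧ (∑ j, (z (Sum.inr j)) ^ 2 ≤ ℏ)}

lemma lt_mul_exp_div_sub_one {c x : ℝ} (hc : 0 < c) (hx : x ≠ c) :
    x < c * Real.exp (x / c - 1) := by
  have hne : x / c - 1 ≠ 0 := by
    rwa [sub_ne_zero, ne_eq, div_eq_one_iff_eq hc.ne']
  calc x = c * (x / c - 1 + 1) := by field_simp; ring
    _ < c * Real.exp (x / c - 1) := by gcongr; exact Real.add_one_lt_exp hne

lemma le_mul_exp_div_sub_one {c : ℝ} (hc : 0 < c) (x : ℝ) : x ≤ c * Real.exp (x / c - 1) := by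
  rcases eq_or_ne x c with rfl | hx
  · simp [hc.ne']
  · exact (lt_mul_exp_div_sub_one hc hx).le

section AMGM

variable {ι : Type*} [Fintype ι] {c : ℝ} {a : ι → ℝ}

lemma prod_mul_exp_div_sub_one_le (hc : 0 < c) (hsum : ∑ i, a i ≤ Fintype.card ι * c) :
    ∏ i, c * Real.exp (a i / c - 1) ≤ c ^ Fintype.card ι := by
  have hexp : ∑ i, (a i / c - 1) ≤ 0 := by
    rw [Finset.sum_sub_distrib, ← Finset.sum_div]
    simp only [Finset.sum_const, Finset.card_univ, nsmul_eq_mul, mul_one, sub_nonpos]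
    rwa [div_le_iff₀ hc]
  rw [Finset.prod_mul_distrib, Finset.prod_const, Finset.card_univ, ← Real.exp_sum]
  exact mul_le_of_le_one_right (by positivity) (Real.exp_le_one_iff.mpr hexp)

lemma prod_le_pow_of_sum_le (ha : ∀ i, 0 ≤ a i) (hc : 0 < c)
    (hsum : ∑ i, a i ≤ Fintype.card ι * c) : ∏ i, a i ≤ c ^ Fintype.card ι :=
  (Finset.prod_le_prod (fun i _ => ha i) fun i _ => le_mul_exp_div_sub_one hc (a i)).trans
    (prod_mul_exp_div_sub_one_le hc hsum)

lemma eq_of_prod_eq_pow_of_sum_le (ha : ∀ i, 0 ≤ a i) (hc : 0 < c)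
    (hsum : ∑ i, a i ≤ Fintype.card ι * c) (hprod : ∏ i, a i = c ^ Fintype.card ι) (i : ι) :
    a i = c := by
  by_contra hi
  have hpos : ∀ j, 0 < a j := fun j => (ha j).lt_of_ne fun hj =>
    (pow_pos hc _).ne' (hprod ▸ Finset.prod_eq_zero (Finset.mem_univ j) hj.symm)
  have hlt : ∏ j, a j < ∏ j, c * Real.exp (a j / c - 1) :=
    Finset.prod_lt_prod (fun j _ => hpos j) (fun j _ => le_mul_exp_div_sub_one hc (a j))
      ⟨i, Finset.mem_univ i, lt_mul_exp_div_sub_one hc hi⟩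
  exact (hlt.trans_le (prod_mul_exp_div_sub_one_le hc hsum)).ne hprod

end AMGM

lemma Matrix.IsHermitian.eq_smul_one_of_eigenvalues_eq {𝕜 n : Type*} [RCLike 𝕜] [Fintype n]
    [DecidableEq n] {A : Matrix n n 𝕜} (hA : A.IsHermitian) {c : ℝ}
    (h : ∀ i, hA.eigenvalues i = c) : A = (c : 𝕜) • 1 := by
  have hdiag : diagonal (RCLike.ofReal ∘ hA.eigenvalues) = (c : 𝕜) • (1 : Matrix n n 𝕜) := by
    rw [smul_one_eq_diagonal]
    exact congrArg diagonal (funext fun i => by simp [h i])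
  rw [hA.spectral_theorem, hdiag, map_smul, map_one]

lemma Matrix.trace_transpose_mul_self {m n : Type*} [Fintype m] [Fintype n] (A : Matrix m n ℝ) :
    (Aᵀ * A).trace = ∑ i, ∑ j, A i j ^ 2 := by
  simp only [trace, diag, mul_apply, transpose_apply, ← sq]
  exact Finset.sum_comm

section Gram

variable {ι : Type*} [Fintype ι] [DecidableEq ι] {c : ℝ}

lemma Matrix.sum_eigenvalues_conjTranspose_mul_self (T : Matrix ι ι ℝ) :
    ∑ i, (posSemidef_conjTranspose_mul_self T).isHermitian.eigenvalues i =
      ∑ i, ∑ j, T i j ^ 2 := by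
  have htr := (posSemidef_conjTranspose_mul_self T).isHermitian.trace_eq_sum_eigenvalues
  simp only [RCLike.ofReal_real_eq_id, id] at htr
  rw [← htr, conjTranspose_eq_transpose_of_trivial, trace_transpose_mul_self]

lemma Matrix.prod_eigenvalues_conjTranspose_mul_self (T : Matrix ι ι ℝ) :
    ∏ i, (posSemidef_conjTranspose_mul_self T).isHermitian.eigenvalues i = T.det ^ 2 := by
  have hdet := (posSemidef_conjTranspose_mul_self T).isHermitian.det_eq_prod_eigenvalues
  simp only [RCLike.ofReal_real_eq_id, id, det_mul, det_conjTranspose, star_trivial] at hdet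
  rw [sq, hdet]

lemma Matrix.det_sq_le_pow_of_sum_sq_le {T : Matrix ι ι ℝ} (hc : 0 < c)
    (h : ∑ i, ∑ j, T i j ^ 2 ≤ Fintype.card ι * c) : T.det ^ 2 ≤ c ^ Fintype.card ι := by
  rw [← T.prod_eigenvalues_conjTranspose_mul_self]
  exact prod_le_pow_of_sum_le (posSemidef_conjTranspose_mul_self T).eigenvalues_nonneg hc
    (T.sum_eigenvalues_conjTranspose_mul_self ▸ h)

lemma Matrix.transpose_mul_self_eq_smul_one_of_det_sq_eq {T : Matrix ι ι ℝ} (hc : 0 < c)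
    (h : ∑ i, ∑ j, T i j ^ 2 ≤ Fintype.card ι * c) (hdet : T.det ^ 2 = c ^ Fintype.card ι) :
    Tᵀ * T = c • 1 := by
  have hS := posSemidef_conjTranspose_mul_self T
  have := hS.isHermitian.eq_smul_one_of_eigenvalues_eq <| eq_of_prod_eq_pow_of_sum_le
    hS.eigenvalues_nonneg hc (T.sum_eigenvalues_conjTranspose_mul_self ▸ h)
    (T.prod_eigenvalues_conjTranspose_mul_self.trans hdet)
  rwa [conjTranspose_eq_transpose_of_trivial] at this

end Gram

lemma Matrix.sum_sq_mulVec_of_transpose_mul_self_eq {ι κ : Type*} [Fintype ι] [Fintype κ]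
    [DecidableEq κ] {T : Matrix ι κ ℝ} {c : ℝ} (hT : Tᵀ * T = c • 1) (u : κ → ℝ) :
    ∑ i, (T *ᵥ u) i ^ 2 = c * ∑ k, u k ^ 2 := by
  calc ∑ i, (T *ᵥ u) i ^ 2 = (T *ᵥ u) ⬝ᵥ (T *ᵥ u) := by simp only [dotProduct, sq]
    _ = u ⬝ᵥ ((Tᵀ * T) *ᵥ u) := by rw [← mulVec_mulVec, dotProduct_mulVec u, vecMul_transpose]
    _ = c * ∑ k, u k ^ 2 := by
      rw [hT, smul_mulVec, one_mulVec, dotProduct_smul, smul_eq_mul]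
      simp only [dotProduct, sq]

section Slab

variable {ι κ : Type*} [Fintype ι] [Fintype κ] {a : ι → ℝ} {A : Matrix ι κ ℝ} {r : ℝ}

/-- Averaging over `±u` (parallelogram law) separates the centre from the linear part. -/
lemma sum_sq_add_sum_sq_mulVec_le
    (h : ∀ u : κ → ℝ, ∑ k, u k ^ 2 ≤ 1 → ∑ i, (a i + (A *ᵥ u) i) ^ 2 ≤ r)
    {u : κ → ℝ} (hu : ∑ k, u k ^ 2 ≤ 1) : ∑ i, a i ^ 2 + ∑ i, (A *ᵥ u) i ^ 2 ≤ r := by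
  have hplus := h u hu
  have hminus := h (-u) (by simpa using hu)
  have hpar : ∑ i, (a i + (A *ᵥ u) i) ^ 2 + ∑ i, (a i + (A *ᵥ -u) i) ^ 2 =
      2 * (∑ i, a i ^ 2 + ∑ i, (A *ᵥ u) i ^ 2) := by
    simp only [mulVec_neg, Pi.neg_apply, ← Finset.sum_add_distrib, Finset.mul_sum]
    exact Finset.sum_congr rfl fun i _ => by ring
  linarith

lemma sum_sq_row_add_sum_sq_le
    (h : ∀ u : κ → ℝ, ∑ k, u k ^ 2 ≤ 1 → ∑ i, (a i + (A *ᵥ u) i) ^ 2 ≤ r) (i : ι) :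
    ∑ k, A i k ^ 2 + ∑ j, a j ^ 2 ≤ r := by
  set ρ := √(∑ k, A i k ^ 2)
  have hρ : ρ ^ 2 = ∑ k, A i k ^ 2 := Real.sq_sqrt (by positivity)
  -- the unit vector along the `i`-th row (zero if the row vanishes)
  set u : κ → ℝ := fun k => ρ⁻¹ * A i k
  have hu : ∑ k, u k ^ 2 ≤ 1 :=
    calc ∑ k, u k ^ 2 = (ρ⁻¹ * ρ) ^ 2 := by simp only [u, mul_pow, ← Finset.mul_sum, ← hρ]
      _ ≤ 1 := pow_le_one₀ (by positivity) (inv_mul_le_one_of_le₀ le_rfl (Real.sqrt_nonneg _))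
  have hAu : (A *ᵥ u) i = ρ :=
    calc (A *ᵥ u) i = ρ⁻¹ * ρ ^ 2 := by
          simp only [u, mulVec, dotProduct, hρ, Finset.mul_sum]
          exact Finset.sum_congr rfl fun k _ => by ring
      _ = ρ := by rw [sq, ← mul_assoc, inv_mul_mul_self]
  have hrow : (A *ᵥ u) i ^ 2 ≤ ∑ j, (A *ᵥ u) j ^ 2 :=
    Finset.single_le_sum (fun j _ => sq_nonneg ((A *ᵥ u) j)) (Finset.mem_univ i)
  rw [hAu, hρ] at hrow
  linarith [sum_sq_add_sum_sq_mulVec_le h hu]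

lemma sum_sq_entries_add_card_mul_le
    (h : ∀ u : κ → ℝ, ∑ k, u k ^ 2 ≤ 1 → ∑ i, (a i + (A *ᵥ u) i) ^ 2 ≤ r) :
    ∑ i, ∑ k, A i k ^ 2 + Fintype.card ι * ∑ j, a j ^ 2 ≤ Fintype.card ι * r := by
  have := Finset.sum_le_sum fun i (_ : i ∈ Finset.univ) => sum_sq_row_add_sum_sq_le h i
  simpa [Finset.sum_add_distrib] using this

end Slab

lemma volume_image_add_mulVec {ι : Type*} [Fintype ι] [DecidableEq ι] (z₀ : ι → ℝ)
    (T : Matrix ι ι ℝ) (s : Set (ι → ℝ)) :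
    volume ((fun z => z₀ + T *ᵥ z) '' s) = ENNReal.ofReal |T.det| * volume s := by
  have himage : (fun z => z₀ + T *ᵥ z) '' s = (z₀ + ·) '' (toLin' T '' s) := by
    rw [Set.image_image]; rfl
  rw [himage, Set.image_add_left, measure_preimage_add,
    Measure.addHaar_image_linearMap, LinearMap.det_toLin']

open Pointwise in
lemma euclBall_eq_smul {n : ℕ} {R : ℝ} (hR : 0 < R) : euclBall n R = R • euclBall n 1 := by
  ext z
  rw [Set.mem_smul_set_iff_inv_smul_mem₀ hR.ne']
  simp only [euclBall, Set.mem_ofPred_eq, Pi.smul_apply, smul_eq_mul, mul_pow, ← Finset.mul_sum,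
    one_pow, inv_pow, inv_mul_le_iff₀ (pow_pos hR 2), mul_one]

lemma volume_euclBall_sqrt (n : ℕ) {ℏ : ℝ} (hℏ : 0 < ℏ) :
    volume (euclBall n √ℏ) = ENNReal.ofReal (ℏ ^ n) * volume (euclBall n 1) := by
  rw [euclBall_eq_smul (Real.sqrt_pos.mpr hℏ), Measure.addHaar_smul,
    Module.finrank_fintype_fun_eq_card, Fintype.card_sum, Fintype.card_fin,
    abs_of_nonneg (by positivity), ← two_mul, pow_mul, Real.sq_sqrt hℏ.le]

lemma volume_euclBall_one_ne_zero (n : ℕ) : volume (euclBall n 1) ≠ 0 := by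
  have hopen : IsOpen {z : Fin n ⊕ Fin n → ℝ | ∑ i, z i ^ 2 < 1} :=
    isOpen_lt (by fun_prop) continuous_const
  have hsub : {z : Fin n ⊕ Fin n → ℝ | ∑ i, z i ^ 2 < 1} ⊆ euclBall n 1 :=
    fun z (hz : ∑ i, z i ^ 2 < 1) => show ∑ i, z i ^ 2 ≤ 1 ^ 2 by rw [one_pow]; exact hz.le
  exact fun h => (hopen.measure_pos volume ⟨0, by simp⟩).ne' (measure_mono_null hsub h)

lemma volume_euclBall_one_ne_top (n : ℕ) : volume (euclBall n 1) ≠ ⊤ := by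
  have hsub : euclBall n 1 ⊆ Metric.closedBall 0 1 := fun z hz => by
    rw [Metric.mem_closedBall, dist_zero_right, pi_norm_le_iff_of_nonneg zero_le_one]
    intro i
    have hzi : z i ^ 2 ≤ ∑ j, z j ^ 2 :=
      Finset.single_le_sum (fun j _ => sq_nonneg (z j)) (Finset.mem_univ i)
    simpa [euclBall, ← sq_le_one_iff_abs_le_one] using hzi.trans (by simpa [euclBall] using hz)
  exact ne_top_of_le_ne_top measure_closedBall_lt_top.ne (measure_mono hsub)

lemma image_mulVec_euclBall_one {n : ℕ} {ℏ : ℝ} (hℏ : 0 < ℏ)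
    {T : Matrix (Fin n ⊕ Fin n) (Fin n ⊕ Fin n) ℝ} (hT : Tᵀ * T = ℏ • 1) :
    (T *ᵥ ·) '' euclBall n 1 = euclBall n √ℏ := by
  have hnorm := sum_sq_mulVec_of_transpose_mul_self_eq hT
  have hright : T * (ℏ⁻¹ • Tᵀ) = 1 := mul_eq_one_comm.mp <| by
    rw [smul_mul_assoc, hT, smul_smul, inv_mul_cancel₀ hℏ.ne', one_smul]
  ext w
  simp only [euclBall, Set.mem_image, Set.mem_ofPred_eq, one_pow, Real.sq_sqrt hℏ.le]
  constructor
  · rintro ⟨u, hu, rfl⟩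
    rw [hnorm]
    exact mul_le_of_le_one_right hℏ.le hu
  · intro hw
    refine ⟨(ℏ⁻¹ • Tᵀ) *ᵥ w, ?_, by rw [mulVec_mulVec, hright, one_mulVec]⟩
    have := hnorm ((ℏ⁻¹ • Tᵀ) *ᵥ w)
    rw [mulVec_mulVec, hright, one_mulVec] at this
    exact le_of_mul_le_mul_left (by linarith) hℏ

section Ellipsoid

variable {n : ℕ} {ℏ : ℝ} {z₀ : Fin n ⊕ Fin n → ℝ} {T : Matrix (Fin n ⊕ Fin n) (Fin n ⊕ Fin n) ℝ}

lemma sum_sq_entries_add_mul_sum_sq_le_of_image_subset_ballProd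
    (hE : (fun z => z₀ + T *ᵥ z) '' euclBall n 1 ⊆ ballProd n ℏ) :
    ∑ i, ∑ k, T i k ^ 2 + n * ∑ i, z₀ i ^ 2 ≤ (n + n) * ℏ := by
  have hmem : ∀ u, ∑ k, u k ^ 2 ≤ 1 → z₀ + T *ᵥ u ∈ ballProd n ℏ := fun u hu =>
    hE ⟨u, by simpa [euclBall] using hu, rfl⟩
  have hX := sum_sq_entries_add_card_mul_le (a := z₀ ∘ Sum.inl) (A := T.submatrix Sum.inl id)
    fun u hu => (hmem u hu).1
  have hP := sum_sq_entries_add_card_mul_le (a := z₀ ∘ Sum.inr) (A := T.submatrix Sum.inr id)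
    fun u hu => (hmem u hu).2
  simp only [Fintype.card_fin, submatrix_apply, id, Function.comp_apply] at hX hP
  rw [Fintype.sum_sum_type, Fintype.sum_sum_type]
  linarith

lemma sum_sq_entries_le_of_image_subset_ballProd
    (hE : (fun z => z₀ + T *ᵥ z) '' euclBall n 1 ⊆ ballProd n ℏ) :
    ∑ i, ∑ k, T i k ^ 2 ≤ Fintype.card (Fin n ⊕ Fin n) * ℏ := by
  have hcenter : 0 ≤ (n : ℝ) * ∑ i, z₀ i ^ 2 := by positivity
  rw [Fintype.card_sum, Fintype.card_fin, Nat.cast_add]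
  linarith [sum_sq_entries_add_mul_sum_sq_le_of_image_subset_ballProd hE]

lemma abs_det_le_of_image_subset_ballProd (hℏ : 0 < ℏ)
    (hE : (fun z => z₀ + T *ᵥ z) '' euclBall n 1 ⊆ ballProd n ℏ) : |T.det| ≤ ℏ ^ n := by
  have h := det_sq_le_pow_of_sum_sq_le hℏ (sum_sq_entries_le_of_image_subset_ballProd hE)
  rw [Fintype.card_sum, Fintype.card_fin, pow_add, ← sq] at h
  exact abs_le_of_sq_le_sq h (by positivity)

lemma transpose_mul_self_eq_smul_one_of_image_subset_ballProd (hℏ : 0 < ℏ)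
    (hE : (fun z => z₀ + T *ᵥ z) '' euclBall n 1 ⊆ ballProd n ℏ) (hdet : |T.det| = ℏ ^ n) :
    Tᵀ * T = ℏ • 1 :=
  transpose_mul_self_eq_smul_one_of_det_sq_eq hℏ (sum_sq_entries_le_of_image_subset_ballProd hE)
    (by rw [← sq_abs, hdet, Fintype.card_sum, Fintype.card_fin, pow_add, sq])

lemma eq_zero_of_image_subset_ballProd_of_transpose_mul_self_eq
    (hE : (fun z => z₀ + T *ᵥ z) '' euclBall n 1 ⊆ ballProd n ℏ) (hT : Tᵀ * T = ℏ • 1) :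
    z₀ = 0 := by
  have hnull : (n : ℝ) * ∑ i, z₀ i ^ 2 ≤ 0 := by
    have htr := trace_transpose_mul_self T
    rw [hT, trace_smul, trace_one, Fintype.card_sum, Fintype.card_fin, smul_eq_mul,
      Nat.cast_add] at htr
    linarith [sum_sq_entries_add_mul_sum_sq_le_of_image_subset_ballProd hE]
  funext i
  have hn : (0 : ℝ) < n := Nat.cast_pos.mpr (i.elim Fin.pos Fin.pos)
  have hsum : ∑ i, z₀ i ^ 2 = 0 :=
    le_antisymm (nonpos_of_mul_nonpos_right hnull hn) (by positivity)
  exact pow_eq_zero_iff two_ne_zero |>.mp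
    (congrFun ((Fintype.sum_eq_zero_iff_of_nonneg fun j => sq_nonneg (z₀ j)).mp hsum) i)

end Ellipsoid

theorem john_ellipsoid_of_double_ball_general
    (n : ℕ) (ℏ : ℝ) (hℏ : 0 < ℏ)
    (z₀ : Fin n ⊕ Fin n → ℝ) (T : Matrix (Fin n ⊕ Fin n) (Fin n ⊕ Fin n) ℝ)
    (hE : (fun z => z₀ + T.mulVec z) '' euclBall n 1 ⊆ ballProd n ℏ) :
    volume ((fun z => z₀ + T.mulVec z) '' euclBall n 1) ≤
        volume (euclBall n (Real.sqrt ℏ)) ∧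
      (volume ((fun z => z₀ + T.mulVec z) '' euclBall n 1) =
          volume (euclBall n (Real.sqrt ℏ)) ↔
        (fun z => z₀ + T.mulVec z) '' euclBall n 1 = euclBall n (Real.sqrt ℏ)) := by
  have hvol := volume_image_add_mulVec z₀ T (euclBall n 1)
  have hball := volume_euclBall_sqrt n hℏ
  refine ⟨?_, fun heq => ?_, fun h => by rw [h]⟩
  · rw [hvol, hball]
    gcongr
    exact abs_det_le_of_image_subset_ballProd hℏ hE
  · rw [hvol, hball, ENNReal.mul_left_inj (volume_euclBall_one_ne_zero n)
      (volume_euclBall_one_ne_top n), ENNReal.ofReal_eq_ofReal_iff (abs_nonneg _) (by positivity)]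
      at heq
    have hT := transpose_mul_self_eq_smul_one_of_image_subset_ballProd hℏ hE heq
    obtain rfl := eq_zero_of_image_subset_ballProd_of_transpose_mul_self_eq hE hT
    simpa only [zero_add] using image_mulVec_euclBall_one hℏ hT

/-- The John ellipsoid of `B_X^n(√ℏ) × B_P^n(√ℏ)` is `B^{2n}(√ℏ)`: any ellipsoid
`E = z₀ + T(B^{2n}(1))` contained in `B_X^n(√ℏ) × B_P^n(√ℏ)` has volume at most that of
`B^{2n}(√ℏ)`, with equality iff `E = B^{2n}(√ℏ)`. -/
theorem john_ellipsoid_of_double_ball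
    (n : ℕ) (hn : 1 ≤ n) (ℏ : ℝ) (hℏ : 0 < ℏ)
    (z₀ : Fin n ⊕ Fin n → ℝ) (T : Matrix (Fin n ⊕ Fin n) (Fin n ⊕ Fin n) ℝ)
    (hT : IsUnit T.det)
    (hE : (fun z => z₀ + T.mulVec z) '' euclBall n 1 ⊆ ballProd n ℏ) :
    volume ((fun z => z₀ + T.mulVec z) '' euclBall n 1) ≤
        volume (euclBall n (Real.sqrt ℏ)) ∧
      (volume ((fun z => z₀ + T.mulVec z) '' euclBall n 1) =
          volume (euclBall n (Real.sqrt ℏ)) ↔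
        (fun z => z₀ + T.mulVec z) '' euclBall n 1 = euclBall n (Real.sqrt ℏ)) :=
  john_ellipsoid_of_double_ball_general n ℏ hℏ z₀ T hE
end
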